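/- arXiv:1910.11721 — 5 statements merged into one kernel-verified Lean document; each statement's English description precedes it below -/
import Mathlib

section
/- Fix a set of m ≥ 2 alternatives, integers l1 with 0 ≤ l1 ≤ m−1 and l2 with 1 ≤ l2 ≤ m, and any integer k ≥ (l1+l2+1)/2. Then the mixture of k Plackett-Luce models is not identifiable from ranked top orders of length at most l1 together with way-orders of length at most l2: there exist two k-PL parameters (α_1,...,α_k, θ^(1),...,θ^(k)) and (α'_1,...,α'_k, θ'^(1),...,θ'^(k)) whose mixing measures ∑_r α_r δ_{θ^(r)} and ∑_r α'_r δ_{θ'^(r)} are different, yet for every ranked top-l order with l ≤ l1 and every l-way order over every size-l subset with l ≤ l2, the two mixtures assign the same marginal probability. -/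
open Finset

/-- `θ` is a Plackett–Luce parameter over `m` alternatives: all entries are
strictly positive and they sum to one. -/
def IsPLParam {m : ℕ} (θ : Fin m → ℝ) : Prop :=
  (∀ i, 0 < θ i) ∧ (∑ i, θ i = 1)

/-- PL marginal probability of the ranked top-`l` order
`σ 0 ≻ σ 1 ≻ ⋯ ≻ σ (l-1) ≻ others` under the parameter `θ`:
`∏_{p=1}^{l} θ_{i_p} / (∑_{q=p}^m θ_{i_q})` (recall `∑_i θ_i = 1`). -/
noncomputable def PLtop {m l : ℕ} (θ : Fin m → ℝ) (σ : Fin l → Fin m) : ℝ :=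
  ∏ p : Fin l, θ (σ p) / (1 - ∑ q ∈ univ.filter (fun q : Fin l => q < p), θ (σ q))

/-- PL marginal probability of the `l`-way order `σ 0 ≻ σ 1 ≻ ⋯ ≻ σ (l-1)`
over the subset `{σ 0, …, σ (l-1)}`:
`∏_{p=1}^{l-1} θ_{i_p} / (∑_{q=p}^{l} θ_{i_q})` (the factor at `p = l` equals `1`). -/
noncomputable def PLway {m l : ℕ} (θ : Fin m → ℝ) (σ : Fin l → Fin m) : ℝ :=
  ∏ p : Fin l, θ (σ p) / (∑ q ∈ univ.filter (fun q : Fin l => p ≤ q), θ (σ q))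

/-- The mixing measure `∑_r α_r δ_{θ^{(r)}}` of a `k`-mixture, represented as the
finitely supported weight function on the parameter space. -/
noncomputable def mixingMeasure {m k : ℕ} (α : Fin k → ℝ) (θ : Fin k → Fin m → ℝ) :
    (Fin m → ℝ) → ℝ :=
  fun t => ∑ r, if θ r = t then α r else 0

/-!
Every mixture component is taken from the one-parameter family `spikeParam a z`, which gives
weight `1 / z` to each alternative other than `a`. Along it, each ranked top-`l` probability
(`l ≤ l₁`) and each `l`-way probability (`l ≤ l₂`) is a rational function of `z` of degree `≤ 0`
whose poles lie in a fixed set `T` of at most `l₁ + l₂ - 1` integers `≤ m - 1`. Multiplied by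
`∏_{c ∈ T} (z - c)`, these become polynomials of degree `< 2k - 1`, so the divided difference on
`2k` nodes `z_j > m - 1` annihilates them. Its weights, times `∏_{c ∈ T} (z_j - c) > 0`, alternate
in sign: the nodes of positive weight form one `k`-mixture, those of negative weight the other.
-/

open Polynomial

/-- `g` agrees on `U` with a rational function of degree `≤ 0` whose poles lie in `T`. -/
def HasPolesIn (U : Set ℝ) (T : Finset ℝ) (g : ℝ → ℝ) : Prop :=
  ∃ N : ℝ[X], N.natDegree ≤ #T ∧ ∀ z ∈ U, g z * ∏ c ∈ T, (z - c) = N.eval z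

namespace HasPolesIn

variable {U : Set ℝ} {T T' : Finset ℝ} {g g' : ℝ → ℝ}

lemma congr (hg : HasPolesIn U T g) (h : ∀ z ∈ U, g' z = g z) : HasPolesIn U T g' := by
  obtain ⟨N, hN, hgN⟩ := hg
  exact ⟨N, hN, fun z hz => by rw [h z hz, hgN z hz]⟩

lemma const (a : ℝ) : HasPolesIn U ∅ (fun _ => a) :=
  ⟨C a, by simp, fun z _ => by simp⟩

lemma inv_sub {c : ℝ} (hc : ∀ z ∈ U, z ≠ c) : HasPolesIn U {c} (fun z => (z - c)⁻¹) :=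
  ⟨1, by simp, fun z hz => by simp [inv_mul_cancel₀ (sub_ne_zero.2 (hc z hz))]⟩

lemma sub_div_sub {c : ℝ} (d : ℝ) (hc : ∀ z ∈ U, z ≠ c) :
    HasPolesIn U {c} (fun z => (z - d) / (z - c)) :=
  ⟨X - C d, by simp,
    fun z hz => by simp [div_mul_cancel₀ _ (sub_ne_zero.2 (hc z hz))]⟩

lemma mono (hg : HasPolesIn U T g) (hT : T ⊆ T') : HasPolesIn U T' g := by
  obtain ⟨N, hN, hgN⟩ := hg
  refine ⟨N * ∏ c ∈ T' \ T, (X - C c), ?_, fun z hz => ?_⟩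
  · calc _ ≤ N.natDegree + (∏ c ∈ T' \ T, (X - C c)).natDegree := natDegree_mul_le
      _ ≤ #T + #(T' \ T) := by
          gcongr
          exact (natDegree_prod_le _ _).trans (by simp)
      _ = #T' := by rw [add_comm, card_sdiff_add_card_eq_card hT]
  · rw [← prod_sdiff hT, eval_mul, ← hgN z hz, eval_prod]
    simp only [eval_sub, eval_X, eval_C]
    ring

lemma mul (hg : HasPolesIn U T g) (hg' : HasPolesIn U T' g') (hT : Disjoint T T') :
    HasPolesIn U (T ∪ T') (fun z => g z * g' z) := by
  obtain ⟨N, hN, hgN⟩ := hg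
  obtain ⟨N', hN', hgN'⟩ := hg'
  refine ⟨N * N', ?_, fun z hz => ?_⟩
  · rw [card_union_of_disjoint hT]
    exact natDegree_mul_le.trans (add_le_add hN hN')
  · rw [prod_union hT, eval_mul, ← hgN z hz, ← hgN' z hz]
    ring

lemma prod {ι : Type*} [DecidableEq ι] (s : Finset ι) {T : ι → Finset ℝ} {g : ι → ℝ → ℝ}
    (hg : ∀ i ∈ s, HasPolesIn U (T i) (g i)) (hT : (s : Set ι).PairwiseDisjoint T) :
    HasPolesIn U (s.biUnion T) (fun z => ∏ i ∈ s, g i z) := by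
  induction s using Finset.induction_on with
  | empty => simpa using const (U := U) 1
  | insert i s hi ih =>
    simp only [prod_insert hi, biUnion_insert]
    refine (hg i (mem_insert_self i s)).mul (ih (fun j hj => hg j (mem_insert_of_mem hj))
      (hT.subset (by simp))) ?_
    exact (disjoint_biUnion_right _ _ _).2 fun j hj =>
      hT (by simp) (by simp [hj]) (fun h => hi (h ▸ hj))

/-- The sum is the divided difference of order `#s - 1` of the numerator of `g`, i.e. its
coefficient of degree `#s - 1`, which vanishes. -/
lemma sum_div_prod_erase_eq_zero (hg : HasPolesIn U T g) {ι : Type*} [DecidableEq ι]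
    {s : Finset ι} {v : ι → ℝ} (hv : Set.InjOn v s) (hvU : ∀ i ∈ s, v i ∈ U)
    (hs : #T + 1 < #s) :
    ∑ i ∈ s, (∏ c ∈ T, (v i - c)) / (∏ j ∈ s.erase i, (v i - v j)) * g (v i) = 0 := by
  obtain ⟨N, hN, hgN⟩ := hg
  have hdeg : N.degree < #s := (degree_le_natDegree).trans_lt (by exact_mod_cast (by omega))
  rw [← coeff_eq_zero_of_natDegree_lt (p := N) (n := #s - 1) (by omega),
    Lagrange.coeff_eq_sum hv hdeg]
  refine sum_congr rfl fun i hi => ?_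
  rw [← hgN (v i) (hvU i hi)]
  ring

end HasPolesIn

lemma sum_range_two_mul {M : Type*} [AddCommMonoid M] (f : ℕ → M) (k : ℕ) :
    ∑ j ∈ range (2 * k), f j = ∑ r ∈ range k, (f (2 * r) + f (2 * r + 1)) := by
  induction k with
  | zero => simp
  | succ k ih =>
    rw [mul_add, mul_one, sum_range_succ, sum_range_succ, sum_range_succ, ih, add_assoc]

lemma sum_fin_odd_eq_sum_fin_even {k : ℕ} {w F : ℕ → ℝ}
    (h : ∑ j ∈ range (2 * k), w j * F j = 0) (s : ℝ) :
    ∑ r : Fin k, w (2 * r + 1) / s * F (2 * r + 1) = ∑ r : Fin k, -w (2 * r) / s * F (2 * r) := by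
  rw [sum_range_two_mul] at h
  rw [Fin.sum_univ_eq_sum_range (fun r => w (2 * r + 1) / s * F (2 * r + 1)),
    Fin.sum_univ_eq_sum_range (fun r => -w (2 * r) / s * F (2 * r)), ← sub_eq_zero,
    ← sum_sub_distrib]
  calc _ = (∑ r ∈ range k, (w (2 * r) * F (2 * r) + w (2 * r + 1) * F (2 * r + 1))) / s := by
        rw [sum_div]
        exact sum_congr rfl fun r _ => by ring
    _ = 0 := by rw [h, zero_div]

lemma neg_one_pow_mul_prod_erase_pos {v : ℕ → ℝ} (hv : StrictMono v) {n j : ℕ} (hj : j < n) :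
    0 < (-1) ^ (n - 1 - j) * ∏ i ∈ (range n).erase j, (v j - v i) := by
  have hsplit : (range n).erase j = range j ∪ Ico (j + 1) n := by
    ext i; simp only [mem_erase, mem_range, mem_union, mem_Ico]; omega
  have hdisj : Disjoint (range j) (Ico (j + 1) n) :=
    disjoint_left.2 fun i hi hi' => by simp only [mem_range, mem_Ico] at hi hi'; omega
  have hflip : ∏ i ∈ Ico (j + 1) n, (v j - v i)
      = (-1) ^ (n - 1 - j) * ∏ i ∈ Ico (j + 1) n, (v i - v j) := by
    rw [show n - 1 - j = #(Ico (j + 1) n) by simp; omega, ← prod_neg]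
    simp only [neg_sub]
  rw [hsplit, prod_union hdisj, hflip]
  set A := ∏ i ∈ range j, (v j - v i)
  set B := ∏ i ∈ Ico (j + 1) n, (v i - v j)
  have hA : 0 < A := prod_pos fun i hi => sub_pos.2 (hv (mem_range.1 hi))
  have hB : 0 < B := prod_pos fun i hi => sub_pos.2 (hv (by simp only [mem_Ico] at hi; omega))
  calc 0 < A * B := mul_pos hA hB
    _ = ((-1) ^ (n - 1 - j)) ^ 2 * (A * B) := by rw [pow_right_comm, neg_one_sq, one_pow, one_mul]
    _ = _ := by ring

lemma exists_alternating_weights {x₀ : ℝ} {T : Finset ℝ} (hT : ∀ c ∈ T, c ≤ x₀) {k : ℕ}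
    (hk : #T + 2 ≤ 2 * k) :
    ∃ w : ℕ → ℝ, (∀ r < k, w (2 * r) < 0 ∧ 0 < w (2 * r + 1)) ∧
      ∀ g, HasPolesIn (Set.Ioi x₀) T g → ∑ j ∈ range (2 * k), w j * g (x₀ + 1 + j) = 0 := by
  set v : ℕ → ℝ := fun j => x₀ + 1 + j
  have hv : StrictMono v := fun i j h => by simp only [v]; gcongr
  have hvx₀ : ∀ j, x₀ < v j := fun j => by
    simp only [v]; linarith [(j.cast_nonneg : (0 : ℝ) ≤ j)]
  refine ⟨fun j => (∏ c ∈ T, (v j - c)) / ∏ i ∈ (range (2 * k)).erase j, (v j - v i),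
    fun r hr => ?_, fun g hg => hg.sum_div_prod_erase_eq_zero hv.injective.injOn
      (fun j _ => hvx₀ j) (by simp only [card_range]; omega)⟩
  have hnum : ∀ j, 0 < ∏ c ∈ T, (v j - c) :=
    fun j => prod_pos fun c hc => sub_pos.2 ((hT c hc).trans_lt (hvx₀ j))
  have heven := neg_one_pow_mul_prod_erase_pos hv (j := 2 * r) (n := 2 * k) (by omega)
  have hodd := neg_one_pow_mul_prod_erase_pos hv (j := 2 * r + 1) (n := 2 * k) (by omega)
  rw [Odd.neg_one_pow ⟨k - 1 - r, by omega⟩, neg_one_mul, neg_pos] at heven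
  rw [Even.neg_one_pow ⟨k - 1 - r, by omega⟩, one_mul] at hodd
  exact ⟨div_neg_of_pos_of_neg (hnum _) heven, div_pos (hnum _) hodd⟩

lemma exists_balanced_mixtures {x₀ : ℝ} {T : Finset ℝ} (hT : ∀ c ∈ T, c ≤ x₀) {k : ℕ}
    (hk : #T + 2 ≤ 2 * k) :
    ∃ α α' z z' : Fin k → ℝ, (∀ r, 0 < α r) ∧ ∑ r, α r = 1 ∧ (∀ r, 0 < α' r) ∧
      ∑ r, α' r = 1 ∧ (∀ r, x₀ < z r ∧ x₀ < z' r) ∧ (∀ r r', z r ≠ z' r') ∧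
      ∀ g, HasPolesIn (Set.Ioi x₀) T g → ∑ r, α r * g (z r) = ∑ r, α' r * g (z' r) := by
  obtain ⟨w, hw, hwg⟩ := exists_alternating_weights hT hk
  set s := ∑ r : Fin k, w (2 * r + 1)
  have hs : 0 < s := sum_pos (fun r _ => (hw r r.isLt).2) (univ_nonempty_iff.2 ⟨⟨0, by omega⟩⟩)
  have hbalance g (hg : HasPolesIn (Set.Ioi x₀) T g) :=
    sum_fin_odd_eq_sum_fin_even (hwg g hg) s
  have hα : ∑ r : Fin k, w (2 * r + 1) / s = 1 := by rw [← sum_div, div_self hs.ne']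
  have hα' := hbalance _ ((HasPolesIn.const 1).mono (empty_subset T))
  simp only [mul_one, hα] at hα'
  have hnode (j : ℕ) : x₀ < x₀ + 1 + j := by linarith [(j.cast_nonneg : (0 : ℝ) ≤ j)]
  refine ⟨fun r => w (2 * r + 1) / s, fun r => -w (2 * r) / s,
    fun r => x₀ + 1 + (2 * r + 1 : ℕ), fun r => x₀ + 1 + (2 * r : ℕ),
    fun r => div_pos (hw r r.isLt).2 hs, hα, fun r => div_pos (neg_pos.2 (hw r r.isLt).1) hs,
    hα'.symm, fun r => ⟨hnode _, hnode _⟩, fun r r' h => ?_, hbalance⟩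
  simp only [add_right_inj, Nat.cast_inj] at h
  omega

lemma mixingMeasure_ne_of_forall_ne {m k : ℕ} {α α' : Fin k → ℝ} {θ θ' : Fin k → Fin m → ℝ}
    (hα : ∀ r, 0 < α r) (r : Fin k) (h : ∀ r', θ' r' ≠ θ r) :
    mixingMeasure α θ ≠ mixingMeasure α' θ' := by
  intro heq
  have hpos : 0 < mixingMeasure α θ (θ r) :=
    sum_pos' (fun r' _ => by split_ifs; exacts [(hα r').le, le_rfl])
      ⟨r, mem_univ r, by simp [hα r]⟩
  have hzero : mixingMeasure α' θ' (θ r) = 0 := sum_eq_zero fun r' _ => if_neg (h r')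
  exact hpos.ne' (heq ▸ hzero)

noncomputable def spikeParam {m : ℕ} (a : Fin m) (z : ℝ) : Fin m → ℝ :=
  fun i => z⁻¹ + if i = a then 1 - m / z else 0

section spikeParam

variable {m : ℕ} (a : Fin m)

lemma sum_spikeParam (z : ℝ) (s : Finset (Fin m)) :
    ∑ i ∈ s, spikeParam a z i = #s / z + if a ∈ s then 1 - m / z else 0 := by
  simp [spikeParam, sum_add_distrib, div_eq_mul_inv]

lemma isPLParam_spikeParam {z : ℝ} (hz : (m : ℝ) - 1 < z) : IsPLParam (spikeParam a z) := by
  have hz0 : 0 < z := by linarith [(Nat.one_le_cast (α := ℝ)).2 a.pos]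
  refine ⟨fun i => ?_, ?_⟩
  · by_cases hi : i = a
    · rw [spikeParam, if_pos hi, show z⁻¹ + (1 - m / z) = (z - (m - 1)) / z by field_simp; ring]
      exact div_pos (by linarith) hz0
    · simpa [spikeParam, hi] using hz0
  · rw [sum_spikeParam, if_pos (mem_univ a), card_univ, Fintype.card_fin]
    ring

lemma spikeParam_injective (hm : 2 ≤ m) : Function.Injective (spikeParam a) := by
  intro z z' h
  have hm1 : (1 : ℝ) - m ≠ 0 := by
    have : (2 : ℝ) ≤ m := by exact_mod_cast hm
    linarith
  have ha := congrFun h a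
  simp only [spikeParam, ↓reduceIte] at ha
  exact inv_injective (mul_left_cancel₀ hm1 (by linear_combination ha))

variable {a} {l : ℕ} {σ : Fin l → Fin m}

lemma sum_spikeParam_comp (hσ : Function.Injective σ) (z : ℝ) (F : Finset (Fin l)) :
    ∑ q ∈ F, spikeParam a z (σ q) = #F / z + if ∃ q ∈ F, σ q = a then 1 - m / z else 0 := by
  calc _ = ∑ i ∈ F.map ⟨σ, hσ⟩, spikeParam a z i := (sum_map _ _ _).symm
    _ = _ := by rw [sum_spikeParam, card_map]; simp

end spikeParam

section marginals

variable {m l : ℕ} {σ : Fin l → Fin m} (hσ : Function.Injective σ) (a : Fin m)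
include hσ

lemma hasPolesIn_PLtop_factor (p : Fin l) :
    HasPolesIn (Set.Ioi ((m : ℝ) - 1)) {(p : ℝ)} fun z =>
      spikeParam a z (σ p) /
        (1 - ∑ q ∈ univ.filter (fun q : Fin l => q < p), spikeParam a z (σ q)) := by
  have hpm : (p : ℝ) + 1 ≤ m := by exact_mod_cast p.isLt.trans_le (Fin.le_of_injective σ hσ)
  have hzp : ∀ z ∈ Set.Ioi ((m : ℝ) - 1), z ≠ p := fun z hz => by
    rw [Set.mem_Ioi] at hz; linarith
  have hz0 : ∀ z ∈ Set.Ioi ((m : ℝ) - 1), z ≠ 0 := fun z hz => by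
    rw [Set.mem_Ioi] at hz; linarith [(Nat.cast_nonneg p : (0 : ℝ) ≤ p)]
  simp only [sum_spikeParam_comp hσ, filter_gt_eq_Iio, Fin.card_Iio]
  by_cases hbefore : ∃ q ∈ Iio p, σ q = a
  · have hσp : σ p ≠ a := fun h => by
      obtain ⟨q, hq, hqa⟩ := hbefore
      exact (mem_Iio.1 hq).ne (hσ (hqa.trans h.symm))
    refine ((HasPolesIn.const (m - p : ℝ)⁻¹).mono (empty_subset _)).congr fun z hz => ?_
    simp only [spikeParam, if_pos hbefore, if_neg hσp, add_zero]
    rw [show 1 - (p / z + (1 - m / z)) = (m - p) * z⁻¹ by ring,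
      div_mul_cancel_right₀ (inv_ne_zero (hz0 z hz))]
  · by_cases hσp : σ p = a
    · refine (HasPolesIn.sub_div_sub (m - 1) hzp).congr fun z hz => ?_
      have := sub_ne_zero.2 (hzp z hz)
      simp only [spikeParam, if_neg hbefore, if_pos hσp, add_zero]
      field_simp [hz0 z hz]
      ring
    · refine (HasPolesIn.inv_sub hzp).congr fun z hz => ?_
      have := sub_ne_zero.2 (hzp z hz)
      simp only [spikeParam, if_neg hbefore, if_neg hσp, add_zero]
      field_simp [hz0 z hz]

lemma hasPolesIn_PLtop_spikeParam :
    HasPolesIn (Set.Ioi ((m : ℝ) - 1)) ((range l).image (↑)) fun z => PLtop (spikeParam a z) σ := by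
  refine (HasPolesIn.prod univ (fun p _ => hasPolesIn_PLtop_factor hσ a p)
    fun p _ q _ hpq => disjoint_singleton.2 fun h => hpq (Fin.ext (by exact_mod_cast h))).mono ?_
  exact biUnion_subset.2 fun p _ => singleton_subset_iff.2 (mem_image.2 ⟨p, by simp, rfl⟩)

lemma hasPolesIn_PLway_factor (p : Fin l) :
    HasPolesIn (Set.Ioi ((m : ℝ) - 1)) {((m - l + p : ℕ) : ℝ)} fun z =>
      spikeParam a z (σ p) / ∑ q ∈ univ.filter (fun q : Fin l => p ≤ q), spikeParam a z (σ q) := by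
  have hlm := Fin.le_of_injective σ hσ
  have hc : ((m - l + p : ℕ) : ℝ) = m - (l - p) := by
    rw [Nat.cast_add, Nat.cast_sub hlm]; ring
  have hpl : (p : ℝ) + 1 ≤ l := by exact_mod_cast p.isLt
  have hzc : ∀ z ∈ Set.Ioi ((m : ℝ) - 1), z ≠ ((m - l + p : ℕ) : ℝ) := fun z hz => by
    rw [Set.mem_Ioi] at hz; rw [hc]; linarith
  have hz0 : ∀ z ∈ Set.Ioi ((m : ℝ) - 1), z ≠ 0 := fun z hz => by
    rw [Set.mem_Ioi] at hz; linarith [(Nat.cast_nonneg (m - l + p) : (0 : ℝ) ≤ _), hc]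
  simp only [sum_spikeParam_comp hσ, filter_le_eq_Ici, Fin.card_Ici, Nat.cast_sub p.isLt.le]
  by_cases hafter : ∃ q ∈ Ici p, σ q = a
  · by_cases hσp : σ p = a
    · refine (HasPolesIn.sub_div_sub (m - 1) hzc).congr fun z hz => ?_
      have : z - m + l - p ≠ 0 := fun h => hzc z hz (by rw [hc]; linarith)
      rw [hc]
      simp only [spikeParam, if_pos hafter, if_pos hσp]
      field_simp [hz0 z hz]
      ring
    · refine (HasPolesIn.inv_sub hzc).congr fun z hz => ?_
      have : z - m + l - p ≠ 0 := fun h => hzc z hz (by rw [hc]; linarith)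
      rw [hc]
      simp only [spikeParam, if_pos hafter, if_neg hσp, add_zero]
      field_simp [hz0 z hz]
      ring
  · have hσp : σ p ≠ a := fun h => hafter ⟨p, mem_Ici.2 le_rfl, h⟩
    refine ((HasPolesIn.const (l - p : ℝ)⁻¹).mono (empty_subset _)).congr fun z hz => ?_
    simp only [spikeParam, if_neg hafter, if_neg hσp, add_zero]
    rw [div_div_eq_mul_div, inv_mul_cancel₀ (hz0 z hz), one_div]

lemma hasPolesIn_PLway_spikeParam :
    HasPolesIn (Set.Ioi ((m : ℝ) - 1)) ((range (l - 1)).image fun p => ((m - l + p : ℕ) : ℝ))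
      fun z => PLway (spikeParam a z) σ := by
  cases l with
  | zero => exact ((HasPolesIn.const 1).mono (empty_subset _)).congr fun z _ => by simp [PLway]
  | succ n =>
    -- The last factor is `θ / θ = 1`; splitting it off keeps the pole `m - 1` out.
    refine ((HasPolesIn.prod univ (fun p _ => hasPolesIn_PLway_factor hσ a p.castSucc)
      fun p _ q _ hpq => disjoint_singleton.2 fun h => hpq (Fin.ext ?_)).mono ?_).congr
        fun z hz => ?_
    · have := Nat.cast_injective h
      simp only [Fin.val_castSucc] at this
      omega
    · exact biUnion_subset.2 fun p _ => singleton_subset_iff.2 (mem_image.2 ⟨p, by simp, rfl⟩)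
    · have hlast : univ.filter (fun q : Fin (n + 1) => Fin.last n ≤ q) = {Fin.last n} := by
        ext q; simp [Fin.last_le_iff]
      have hpos := (isPLParam_spikeParam a hz).1 (σ (Fin.last n))
      rw [PLway, Fin.prod_univ_castSucc, hlast, sum_singleton, div_self hpos.ne', mul_one]

end marginals

/-- The poles `0, …, l1 - 1` of the top orders and `m - l2, …, m - 2` of the way orders. -/
noncomputable def marginalPoles (m l1 l2 : ℕ) : Finset ℝ :=
  (range l1 ∪ Ico (m - l2) (m - 1)).image (↑)

section marginalPoles

variable {m l1 l2 : ℕ}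

lemma le_of_mem_marginalPoles (hl1 : l1 ≤ m - 1) :
    ∀ c ∈ marginalPoles m l1 l2, c ≤ (m : ℝ) - 1 := by
  simp only [marginalPoles, mem_image, mem_union, mem_range, mem_Ico]
  rintro _ ⟨c, hc, rfl⟩
  have : ((c + 1 : ℕ) : ℝ) ≤ m := by exact_mod_cast (by omega : c + 1 ≤ m)
  push_cast at this
  linarith

lemma card_marginalPoles_lt (hl2 : 1 ≤ l2) (hl2m : l2 ≤ m) :
    #(marginalPoles m l1 l2) < l1 + l2 := by
  have : #(marginalPoles m l1 l2) ≤ #(range l1) + #(Ico (m - l2) (m - 1)) :=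
    card_image_le.trans (card_union_le _ _)
  simp only [card_range, Nat.card_Ico] at this
  omega

lemma image_range_subset_marginalPoles {l : ℕ} (hl : l ≤ l1) :
    (range l).image (↑) ⊆ marginalPoles m l1 l2 :=
  image_subset_image ((range_subset_range.2 hl).trans subset_union_left)

lemma image_range_pred_subset_marginalPoles {l : ℕ} (hl : l ≤ l2) (hl2m : l2 ≤ m) :
    (range (l - 1)).image (fun p => ((m - l + p : ℕ) : ℝ)) ⊆ marginalPoles m l1 l2 := by
  refine image_subset_iff.2 fun p hp => mem_image.2 ⟨m - l + p, ?_, rfl⟩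
  simp only [mem_range, mem_union, mem_Ico] at hp ⊢
  omega

end marginalPoles

/-- **Non-identifiability of `k`-PL from ranked top-`l₁` and `l₂`-way data**
(Theorem 1): if `m ≥ 2`, `l₁ ≤ m - 1`, `1 ≤ l₂ ≤ m` and `k ≥ (l₁+l₂+1)/2`,
then there are two `k`-PL parameters with different mixing measures giving the
same marginal probability to every ranked top-`l` order with `l ≤ l₁` and to
every `l`-way order with `l ≤ l₂`. -/
theorem kPL_nonidentifiable_top_way
    (m l1 l2 k : ℕ) (hm : 2 ≤ m) (hl1 : l1 ≤ m - 1) (hl2 : 1 ≤ l2) (hl2m : l2 ≤ m)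
    (hk : l1 + l2 + 1 ≤ 2 * k) :
    ∃ (α α' : Fin k → ℝ) (θ θ' : Fin k → Fin m → ℝ),
      (∀ r, 0 < α r) ∧ (∑ r, α r = 1) ∧ (∀ r, IsPLParam (θ r)) ∧
      (∀ r, 0 < α' r) ∧ (∑ r, α' r = 1) ∧ (∀ r, IsPLParam (θ' r)) ∧
      mixingMeasure α θ ≠ mixingMeasure α' θ' ∧
      (∀ (l : ℕ), l ≤ l1 → ∀ σ : Fin l → Fin m, Function.Injective σ →
        ∑ r, α r * PLtop (θ r) σ = ∑ r, α' r * PLtop (θ' r) σ) ∧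
      (∀ (l : ℕ), l ≤ l2 → ∀ σ : Fin l → Fin m, Function.Injective σ →
        ∑ r, α r * PLway (θ r) σ = ∑ r, α' r * PLway (θ' r) σ) := by
  obtain ⟨α, α', z, z', hα, hα1, hα', hα'1, hz, hzz', hbalance⟩ :=
    exists_balanced_mixtures (k := k) (le_of_mem_marginalPoles (l2 := l2) hl1)
      (by have := card_marginalPoles_lt (l1 := l1) hl2 hl2m; omega)
  let a : Fin m := ⟨0, by omega⟩
  refine ⟨α, α', fun r => spikeParam a (z r), fun r => spikeParam a (z' r), hα, hα1,
    fun r => isPLParam_spikeParam a (hz r).1, hα', hα'1, fun r => isPLParam_spikeParam a (hz r).2,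
    mixingMeasure_ne_of_forall_ne hα ⟨0, by omega⟩
      fun r h => hzz' _ _ (spikeParam_injective a hm h).symm,
    fun l hl σ hσ => hbalance _ ((hasPolesIn_PLtop_spikeParam hσ a).mono
      (image_range_subset_marginalPoles hl)),
    fun l hl σ hσ => hbalance _ ((hasPolesIn_PLway_spikeParam hσ a).mono
      (image_range_pred_subset_marginalPoles hl hl2m))⟩
end

section
/- Let m ≥ 4. If two 2-PL parameters (α, θ^(1), θ^(2)) and (α', θ'^(1), θ'^(2)), with α, α' ∈ (0,1), assign the same marginal probability to every ranked top-3 order a_{i_1} ≻ a_{i_2} ≻ a_{i_3} ≻ others, then their mixing measures coincide: α δ_{θ^(1)} + (1−α) δ_{θ^(2)} = α' δ_{θ'^(1)} + (1−α') δ_{θ'^(2)}. In other words, the mixture of two Plackett-Luce models over m ≥ 4 alternatives is identifiable (modulo label switching) from ranked top-3 data. -/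
open Finset

/-- The mixing measure `α δ_{θ₁} + (1-α) δ_{θ₂}` of a 2-mixture, represented as the
finitely supported weight function on the parameter space. -/
noncomputable def mixing2 {m : ℕ} (α : ℝ) (θ1 θ2 : Fin m → ℝ) : (Fin m → ℝ) → ℝ :=
  fun t => (if θ1 = t then α else 0) + (if θ2 = t then 1 - α else 0)

/-!
The difference of the two mixing measures is a signed combination `∑ r, c r • δ (z r)` of at
most four distinct PL parameters whose top-3 marginals vanish; summing over the last place
shows that its top-2 and top-1 marginals and its total mass vanish as well.

If the `z r` are not collinear, then (as there are at most four of them) every linear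
relation among them is a multiple of `c`. Applied to the relations produced by the top-2
marginals this makes every coordinate `i` with `eᵢ ∉ span (z r)` constant in `r`; since
`span (z r) ≠ ℝᵐ`, the `z r` are then all equal.

If they are collinear, `z r = w + μ r • d`, and the top-2 and top-3 marginals are rational
functions of `μ r` with poles at the zeros of `1 - z i` and `1 - z i - z j`. Every marginal
identity with a pole yields `∑ r, c r / (μ r - s) = 0`, and two distinct poles `s`,
together with `∑ r, c r = ∑ r, c r * μ r = 0`, give four vanishing moments of
`c r / ((μ r - s) (μ r - s'))`, hence `c = 0` by Vandermonde. A case analysis on the zeros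
of `d` shows that two distinct poles always occur.
-/

lemma Fin.exists_notMem_of_card_lt {m : ℕ} (s : Finset (Fin m)) (hs : s.card < m) : ∃ k, k ∉ s := by
  obtain ⟨k, -, hk⟩ := exists_mem_notMem_of_card_lt_card (s := s) (t := univ)
    (by rwa [card_univ, Fintype.card_fin])
  exact ⟨k, hk⟩

lemma PLtop_snoc {m l : ℕ} (θ : Fin m → ℝ) (σ : Fin l → Fin m) (k : Fin m) :
    PLtop θ (Fin.snoc σ k) = PLtop θ σ * (θ k / (1 - ∑ q, θ (σ q))) := by
  have hlast : ∀ p : Fin l, ¬Fin.last l < p.castSucc := fun p => (Fin.castSucc_lt_last p).not_gt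
  simp only [PLtop, Fin.prod_univ_castSucc, sum_filter, Fin.sum_univ_castSucc, Fin.snoc_castSucc,
    Fin.snoc_last, Fin.castSucc_lt_castSucc_iff, Fin.castSucc_lt_last, hlast, lt_irrefl, if_true,
    if_false, add_zero]

lemma PLtop_zero {m : ℕ} (θ : Fin m → ℝ) (σ : Fin 0 → Fin m) : PLtop θ σ = 1 := by
  simp [PLtop]

lemma PLtop_one {m : ℕ} (θ : Fin m → ℝ) (k : Fin m) : PLtop θ ![k] = θ k := by
  simp [PLtop]

lemma PLtop_two {m : ℕ} (θ : Fin m → ℝ) (i k : Fin m) :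
    PLtop θ ![i, k] = θ i / (1 - θ i) * θ k := by
  simp [PLtop, Fin.prod_univ_two, sum_filter]
  ring

lemma PLtop_three {m : ℕ} (θ : Fin m → ℝ) (i j k : Fin m) :
    PLtop θ ![i, j, k] = θ i * θ j / ((1 - θ i) * (1 - θ i - θ j)) * θ k := by
  simp [PLtop, Fin.prod_univ_three, sum_filter, Fin.sum_univ_three]
  ring

lemma sum_mixing2_mul {m : ℕ} (α : ℝ) {θ₁ θ₂ : Fin m → ℝ} {S : Finset (Fin m → ℝ)}
    (h₁ : θ₁ ∈ S) (h₂ : θ₂ ∈ S) (f : (Fin m → ℝ) → ℝ) :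
    ∑ t ∈ S, mixing2 α θ₁ θ₂ t * f t = α * f θ₁ + (1 - α) * f θ₂ := by
  simp [mixing2, add_mul, sum_add_distrib, ite_mul, h₁, h₂]

namespace IsPLParam

variable {m : ℕ} {θ : Fin m → ℝ}

lemma sum_lt_one (hθ : IsPLParam θ) {s : Finset (Fin m)} (hs : s.card < m) :
    ∑ k ∈ s, θ k < 1 := by
  obtain ⟨k, hk⟩ := Fin.exists_notMem_of_card_lt s hs
  rw [← hθ.2]
  exact sum_lt_sum_of_subset (subset_univ s) (mem_univ k) hk (hθ.1 k) fun j _ _ => (hθ.1 j).le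

lemma lt_one (hθ : IsPLParam θ) (hm : 2 ≤ m) (i : Fin m) : θ i < 1 := by
  simpa using hθ.sum_lt_one (s := {i}) (by simp; omega)

lemma add_lt_one (hθ : IsPLParam θ) (hm : 3 ≤ m) {i j : Fin m} (hij : i ≠ j) :
    θ i + θ j < 1 := by
  simpa [sum_pair hij] using hθ.sum_lt_one (s := {i, j}) (card_le_two.trans_lt (by omega))

lemma sum_PLtop_snoc (hθ : IsPLParam θ) {l : ℕ} {σ : Fin l → Fin m}
    (hσ : Function.Injective σ) (hl : l < m) :
    ∑ k ∈ univ \ univ.image σ, PLtop θ (Fin.snoc σ k) = PLtop θ σ := by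
  have himage : ∑ k ∈ univ.image σ, θ k = ∑ q, θ (σ q) := sum_image fun _ _ _ _ h => hσ h
  have hrest : ∑ k ∈ univ \ univ.image σ, θ k = 1 - ∑ q, θ (σ q) := by
    rw [sum_sdiff_eq_sub (subset_univ _), hθ.2, himage]
  have hpos : 0 < 1 - ∑ q, θ (σ q) := by
    rw [← himage, sub_pos]
    exact hθ.sum_lt_one (card_image_le.trans_lt (by simpa using hl))
  simp_rw [PLtop_snoc, ← mul_sum, ← sum_div, hrest, div_self hpos.ne', mul_one]

end IsPLParam

namespace TwoPL

variable {m : ℕ} {ι : Type*} [Fintype ι]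

def TopVanishes (l : ℕ) (z : ι → Fin m → ℝ) (c : ι → ℝ) : Prop :=
  ∀ σ : Fin l → Fin m, Function.Injective σ → ∑ r, c r * PLtop (z r) σ = 0

section Marginals

variable {z : ι → Fin m → ℝ} {c : ι → ℝ}

lemma TopVanishes.of_succ {l : ℕ} (h : TopVanishes (l + 1) z c) (hz : ∀ r, IsPLParam (z r))
    (hl : l < m) : TopVanishes l z c := by
  intro σ hσ
  calc ∑ r, c r * PLtop (z r) σ
      = ∑ r, c r * ∑ k ∈ univ \ univ.image σ, PLtop (z r) (Fin.snoc σ k) := by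
        simp_rw [(hz _).sum_PLtop_snoc hσ hl]
    _ = ∑ k ∈ univ \ univ.image σ, ∑ r, c r * PLtop (z r) (Fin.snoc σ k) := by
        simp_rw [mul_sum]; exact sum_comm
    _ = 0 := sum_eq_zero fun k hk =>
        h _ (Fin.snoc_injective_iff.mpr ⟨hσ, by simpa using hk⟩)

lemma TopVanishes.sum_eq_zero (h : TopVanishes 0 z c) : ∑ r, c r = 0 := by
  simpa [PLtop_zero] using h Fin.elim0 (Function.injective_of_subsingleton _)

lemma TopVanishes.sum_smul_eq_zero (h : TopVanishes 1 z c) : ∑ r, c r • z r = 0 := by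
  funext k
  simpa [PLtop_one] using h ![k] (Function.injective_of_subsingleton _)

lemma TopVanishes.two (h : TopVanishes 2 z c) {i k : Fin m} (hik : i ≠ k) :
    ∑ r, c r * (z r i / (1 - z r i)) * z r k = 0 := by
  have hσ : Function.Injective ![i, k] := by
    intro a b; fin_cases a <;> fin_cases b <;> simp [hik, hik.symm]
  simpa [PLtop_two, mul_assoc] using h _ hσ

lemma TopVanishes.three (h : TopVanishes 3 z c) {i j k : Fin m} (hij : i ≠ j) (hik : i ≠ k)
    (hjk : j ≠ k) :
    ∑ r, c r * (z r i * z r j / ((1 - z r i) * (1 - z r i - z r j))) * z r k = 0 := by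
  have hσ : Function.Injective ![i, j, k] := by
    intro a b; fin_cases a <;> fin_cases b <;> simp [hij, hik, hjk, hij.symm, hik.symm, hjk.symm]
  simpa [PLtop_three, mul_assoc] using h _ hσ

end Marginals

section Dependencies

variable {z : ι → Fin m → ℝ} {c : ι → ℝ}

lemma sum_apply_sum_smul (hz : ∀ r, ∑ k, z r k = 1) (f : ι → ℝ) :
    ∑ k, (∑ r, f r • z r) k = ∑ r, f r := by
  simp_rw [Finset.sum_apply, Pi.smul_apply, smul_eq_mul]
  rw [sum_comm]
  simp_rw [← mul_sum, hz, mul_one]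

lemma sum_eq_zero_of_sum_smul_eq_zero (hz : ∀ r, ∑ k, z r k = 1) {γ : ι → ℝ}
    (hγ : ∑ r, γ r • z r = 0) : ∑ r, γ r = 0 := by
  rw [← sum_apply_sum_smul hz, hγ]
  simp

lemma eq_zero_of_sum_smul_eq_zero_of_support_pair (hz : ∀ r, ∑ k, z r k = 1) {a b : ι}
    (hab : z a ≠ z b) {γ : ι → ℝ} (hγ : ∑ r, γ r • z r = 0)
    (hsupp : ∀ r, r ≠ a → r ≠ b → γ r = 0) : γ = 0 := by
  have hab' : a ≠ b := fun h => hab (congrArg z h)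
  have hsupp' : ∀ r ∈ univ, r ≠ a ∧ r ≠ b → γ r = 0 := fun r _ hr => hsupp r hr.1 hr.2
  have hsum := sum_eq_zero_of_sum_smul_eq_zero hz hγ
  rw [sum_eq_add_of_mem a b (mem_univ a) (mem_univ b) hab' hsupp'] at hsum
  rw [sum_eq_add_of_mem a b (mem_univ a) (mem_univ b) hab'
    fun r _ hr => by simp [hsupp r hr.1 hr.2]] at hγ
  have hb : γ b = -γ a := by linarith
  have ha : γ a = 0 := by
    have : γ a • (z a - z b) = 0 := by
      rwa [hb, neg_smul, ← sub_eq_add_neg, ← smul_sub] at hγ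
    exact (smul_eq_zero.mp this).resolve_right (sub_ne_zero.mpr hab)
  funext r
  by_cases hra : r = a
  · rw [hra, ha]; rfl
  by_cases hrb : r = b
  · rw [hrb, hb, ha, neg_zero]; rfl
  · exact hsupp r hra hrb

lemma exists_eq_add_smul_of_support_triple (hz : ∀ r, ∑ k, z r k = 1) {a b e : ι}
    (hab : a ≠ b) (hae : a ≠ e) (hbe : b ≠ e) {γ : ι → ℝ} (hγ : ∑ r, γ r • z r = 0)
    (hsupp : ∀ r, r ≠ a → r ≠ b → r ≠ e → γ r = 0) (he : γ e ≠ 0) :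
    ∃ t : ℝ, z e = z a + t • (z b - z a) := by
  classical
  have hsub : ∀ r ∈ univ, r ∉ ({a, b, e} : Finset ι) → γ r = 0 := fun r _ hr => by
    simp only [mem_insert, mem_singleton, not_or] at hr
    exact hsupp r hr.1 hr.2.1 hr.2.2
  have hvec : ∑ r ∈ {a, b, e}, γ r • z r = 0 := by
    rw [sum_subset (subset_univ _) fun r hr hrs => by simp [hsub r hr hrs]]; exact hγ
  have hscal : ∑ r ∈ {a, b, e}, γ r = 0 := by
    rw [sum_subset (subset_univ _) hsub]; exact sum_eq_zero_of_sum_smul_eq_zero hz hγ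
  rw [sum_insert (by simp [hab, hae]), sum_pair hbe] at hvec hscal
  refine ⟨-γ b / γ e, funext fun k => ?_⟩
  have hk := congrFun hvec k
  simp only [Pi.add_apply, Pi.smul_apply, smul_eq_mul, Pi.zero_apply, Pi.sub_apply] at hk ⊢
  field_simp
  linear_combination hk - z a k * hscal

lemma forall_eq_smul_or_collinear (hcard : Fintype.card ι ≤ 4) (hz : Function.Injective z)
    (hsum : ∀ r, ∑ k, z r k = 1) (hc : ∀ r, c r ≠ 0) (hdep : ∑ r, c r • z r = 0) :
    (∀ γ : ι → ℝ, ∑ r, γ r • z r = 0 → ∃ t : ℝ, γ = t • c) ∨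
      ∀ r₀ r₁, r₀ ≠ r₁ → ∀ r, ∃ t : ℝ, z r = z r₀ + t • (z r₁ - z r₀) := by
  classical
  refine or_iff_not_imp_left.mpr fun hnot r₀ r₁ h01 r => ?_
  push Not at hnot
  obtain ⟨γ, hγ, hγc⟩ := hnot
  by_cases hr0 : r = r₀
  · exact ⟨0, by simp [hr0]⟩
  by_cases hr1 : r = r₁
  · exact ⟨1, by simp [hr1]⟩
  set s : Finset ι := {r₀, r₁, r}
  obtain ⟨r', hr'⟩ : ∃ r', ∀ x, x ∉ s → x = r' := by
    have hs : s.card = 3 := card_eq_three.mpr ⟨r₀, r₁, r, h01, Ne.symm hr0, Ne.symm hr1, rfl⟩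
    have : Nonempty ι := ⟨r⟩
    have : sᶜ.card ≤ 1 := by rw [card_compl, hs]; omega
    obtain ⟨r', hr'⟩ := card_le_one_iff_subset_singleton.mp this
    exact ⟨r', fun x hx => mem_singleton.mp (hr' (mem_compl.mpr hx))⟩
  -- a relation vanishing at `r'`; it is not zero since `γ` is not a multiple of `c`
  set η : ι → ℝ := γ r' • c - c r' • γ
  have hη : ∑ x, η x • z x = 0 := by
    simp only [η, Pi.sub_apply, Pi.smul_apply, smul_eq_mul, sub_smul, mul_smul, sum_sub_distrib,
      ← smul_sum, hdep, hγ, smul_zero, sub_zero]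
  have hηs : ∀ x, x ∉ s → η x = 0 := fun x hx => by
    rw [hr' x hx]; simp only [η, Pi.sub_apply, Pi.smul_apply, smul_eq_mul]; ring
  refine exists_eq_add_smul_of_support_triple hsum h01 (Ne.symm hr0) (Ne.symm hr1) hη
    (fun x hx0 hx1 hxr => hηs x (by simp [s, hx0, hx1, hxr])) fun hηr => ?_
  refine hγc (γ r' / c r') (funext fun x => ?_)
  have hx := congrFun (eq_zero_of_sum_smul_eq_zero_of_support_pair hsum (hz.ne h01) hη
    fun y hy0 hy1 => by
      by_cases hyr : y = r
      · rwa [hyr]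
      · exact hηs y (by simp [s, hy0, hy1, hyr])) x
  simp only [η, Pi.sub_apply, Pi.smul_apply, smul_eq_mul, Pi.zero_apply] at hx ⊢
  field_simp [hc r']
  linarith

lemma apply_eq_of_single_notMem_span (hm : 2 ≤ m) (hz : ∀ r, IsPLParam (z r))
    (hc : ∀ r, c r ≠ 0) (h2 : TopVanishes 2 z c)
    (hprop : ∀ γ : ι → ℝ, ∑ r, γ r • z r = 0 → ∃ t : ℝ, γ = t • c) {i : Fin m}
    (hi : Pi.single i 1 ∉ Submodule.span ℝ (Set.range z)) (r r' : ι) : z r i = z r' i := by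
  set γ : ι → ℝ := fun r => c r * (z r i / (1 - z r i))
  set v := ∑ r, γ r • z r
  have hv : v = v i • Pi.single i 1 := by
    funext k
    by_cases hk : k = i
    · subst hk; simp
    · simpa [v, γ, Finset.sum_apply, Pi.single_apply, hk] using h2.two (Ne.symm hk)
  have hvi : v i = 0 := by
    by_contra hvi
    have hmem : v ∈ Submodule.span ℝ (Set.range z) :=
      Submodule.sum_mem _ fun r _ => Submodule.smul_mem _ _ (Submodule.subset_span ⟨r, rfl⟩)
    rw [hv] at hmem
    exact hi ((Submodule.smul_mem_iff _ hvi).mp hmem)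
  obtain ⟨t, ht⟩ := hprop γ (by rw [show ∑ r, γ r • z r = v from rfl, hv, hvi, zero_smul])
  have hratio : ∀ r, z r i / (1 - z r i) = t := fun r =>
    mul_left_cancel₀ (hc r) (by simpa [γ, mul_comm] using congrFun ht r)
  have h1 := (hz r).lt_one hm i
  have h1' := (hz r').lt_one hm i
  have := (hratio r).trans (hratio r').symm
  rw [div_eq_div_iff (by linarith) (by linarith)] at this
  linarith

lemma eq_of_forall_eq_smul (hm : 2 ≤ m) (hcard : Fintype.card ι ≤ m)
    (hz : ∀ r, IsPLParam (z r)) (hc : ∀ r, c r ≠ 0)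
    (hdep : ∑ r, c r • z r = 0) (h2 : TopVanishes 2 z c)
    (hprop : ∀ γ : ι → ℝ, ∑ r, γ r • z r = 0 → ∃ t : ℝ, γ = t • c) (r r' : ι) : z r = z r' := by
  set p := Submodule.span ℝ (Set.range z)
  have hrank : Module.finrank ℝ p < m := by
    have hdepend : ¬LinearIndependent ℝ z := fun hli =>
      hc r (Fintype.linearIndependent_iff.mp hli c hdep r)
    rw [linearIndependent_iff_card_eq_finrank_span] at hdepend
    have := finrank_range_le_card (R := ℝ) z
    exact lt_of_lt_of_le (lt_of_le_of_ne this (Ne.symm hdepend)) hcard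
  obtain ⟨i₀, hi₀⟩ : ∃ i, Pi.single i 1 ∉ p := by
    by_contra! h
    have htop : p = ⊤ := eq_top_iff.mpr <| by
      rw [← (Pi.basisFun ℝ (Fin m)).span_eq]
      exact Submodule.span_le.mpr (by rintro _ ⟨i, rfl⟩; simpa using h i)
    rw [htop, finrank_top, Module.finrank_fin_fun] at hrank
    exact lt_irrefl m hrank
  funext i
  by_cases hi : Pi.single i 1 ∈ p
  · exfalso
    obtain ⟨f, hf⟩ := (Submodule.mem_span_range_iff_exists_fun ℝ).mp hi
    have hsumf : ∑ r, f r = 1 := by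
      rw [← sum_apply_sum_smul (fun r => (hz r).2) f, hf]; simp
    have hi₀i : i₀ ≠ i := fun h => hi₀ (h ▸ hi)
    have hcoord := congrFun hf i₀
    simp only [Finset.sum_apply, Pi.smul_apply, smul_eq_mul, Pi.single_apply, hi₀i,
      if_false] at hcoord
    simp_rw [apply_eq_of_single_notMem_span hm hz hc h2 hprop hi₀ _ r, ← sum_mul, hsumf,
      one_mul] at hcoord
    exact ((hz r).1 i₀).ne' hcoord
  · exact apply_eq_of_single_notMem_span hm hz hc h2 hprop hi r r'

end Dependencies

section Algebra

variable {μ c : ι → ℝ}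

lemma eq_zero_of_sum_mul_pow_eq_zero {e : ι → ℝ} (hμ : Function.Injective μ)
    (h : ∀ j < Fintype.card ι, ∑ r, e r * μ r ^ j = 0) : e = 0 := by
  set g := Fintype.equivFin ι
  have hv : Matrix.vecMul (e ∘ g.symm) (Matrix.vandermonde (μ ∘ g.symm)) = 0 := by
    funext j
    simp only [Matrix.vecMul, dotProduct, Matrix.vandermonde, Matrix.of_apply,
      Function.comp_apply, Pi.zero_apply]
    rw [Equiv.sum_comp g.symm fun r => e r * μ r ^ (j : ℕ)]
    exact h j j.2
  have he := Matrix.eq_zero_of_vecMul_eq_zero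
    (Matrix.det_vandermonde_ne_zero_iff.mpr (hμ.comp g.symm.injective)) hv
  funext r
  simpa using congrFun he (g r)

lemma sum_mul_affine (F : ι → ℝ) (a b : ℝ) :
    ∑ r, F r * (a + μ r * b) = a * ∑ r, F r + b * ∑ r, F r * μ r := by
  simp only [mul_sum, ← sum_add_distrib]
  exact sum_congr rfl fun r _ => by ring

lemma sum_eq_zero_of_sum_mul_affine_eq_zero {F : ι → ℝ} {a b a' b' : ℝ}
    (hdet : a * b' - a' * b ≠ 0) (h : ∑ r, F r * (a + μ r * b) = 0)
    (h' : ∑ r, F r * (a' + μ r * b') = 0) : ∑ r, F r = 0 := by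
  rw [sum_mul_affine] at h h'
  exact (mul_eq_zero.mp (by linear_combination b' * h - b * h' :
    (a * b' - a' * b) * ∑ r, F r = 0)).resolve_left hdet

lemma sum_div_affine_eq_zero_of_sum_mul_div_eq_zero {a b a' b' : ℝ} (hb' : b' ≠ 0)
    (hdet : a * b' - a' * b ≠ 0) (hden : ∀ r, a' + μ r * b' ≠ 0) (hc : ∑ r, c r = 0)
    (h : ∑ r, c r * ((a + μ r * b) / (a' + μ r * b')) = 0) :
    ∑ r, c r / (a' + μ r * b') = 0 := by
  have hsplit : ∀ r, c r * ((a + μ r * b) / (a' + μ r * b'))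
      = b / b' * c r + (a * b' - a' * b) / b' * (c r / (a' + μ r * b')) := fun r => by
    field_simp [hden r]
    ring
  simp only [hsplit, sum_add_distrib, ← mul_sum, hc, mul_zero, zero_add] at h
  exact (mul_eq_zero.mp h).resolve_left (div_ne_zero hdet hb')

lemma sum_div_mul_mul_pow_eq_zero (hc : ∑ r, c r = 0) (hcμ : ∑ r, c r * μ r = 0)
    {a b a' b' : ℝ} (hb : b ≠ 0) (hb' : b' ≠ 0) (hdet : a * b' - a' * b ≠ 0)
    (hden : ∀ r, a + μ r * b ≠ 0) (hden' : ∀ r, a' + μ r * b' ≠ 0)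
    (h : ∑ r, c r / (a + μ r * b) = 0) (h' : ∑ r, c r / (a' + μ r * b') = 0) :
    ∀ j < 4, ∑ r, c r / ((a + μ r * b) * (a' + μ r * b')) * μ r ^ j = 0 := by
  set e : ι → ℝ := fun r => c r / ((a + μ r * b) * (a' + μ r * b'))
  have hid : ∀ r,
      (a * b' - a' * b) * e r = b' * (c r / (a' + μ r * b')) - b * (c r / (a + μ r * b)) ∧
      (a * b' - a' * b) * (e r * μ r) = a * (c r / (a + μ r * b)) - a' * (c r / (a' + μ r * b')) ∧
      b * b' * (e r * μ r ^ 2) + (a * b' + a' * b) * (e r * μ r) + a * a' * e r = c r ∧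
      b * b' * (e r * μ r ^ 3) + (a * b' + a' * b) * (e r * μ r ^ 2) + a * a' * (e r * μ r)
        = c r * μ r := by
    intro r
    have hx0 := hden r
    have hy0 := hden' r
    simp only [e]
    set x := a + μ r * b with hx
    set y := a' + μ r * b' with hy
    refine ⟨?_, ?_, ?_, ?_⟩ <;> (field_simp; rw [hx, hy]; ring)
  have hM0 : ∑ r, e r = 0 := by
    have := sum_congr rfl fun r (_ : r ∈ univ) => (hid r).1
    simp only [← mul_sum, sum_sub_distrib, h, h', mul_zero, sub_zero] at this
    exact (mul_eq_zero.mp this).resolve_left hdet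
  have hM1 : ∑ r, e r * μ r = 0 := by
    have := sum_congr rfl fun r (_ : r ∈ univ) => (hid r).2.1
    simp only [← mul_sum, sum_sub_distrib, h, h', mul_zero, sub_zero] at this
    exact (mul_eq_zero.mp this).resolve_left hdet
  have hM2 : ∑ r, e r * μ r ^ 2 = 0 := by
    have := sum_congr rfl fun r (_ : r ∈ univ) => (hid r).2.2.1
    rw [sum_add_distrib, sum_add_distrib, ← mul_sum, ← mul_sum, ← mul_sum, hM0, hM1, hc] at this
    exact (mul_eq_zero.mp (by linarith)).resolve_left (mul_ne_zero hb hb')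
  have hM3 : ∑ r, e r * μ r ^ 3 = 0 := by
    have := sum_congr rfl fun r (_ : r ∈ univ) => (hid r).2.2.2
    rw [sum_add_distrib, sum_add_distrib, ← mul_sum, ← mul_sum, ← mul_sum, hM1, hM2, hcμ] at this
    exact (mul_eq_zero.mp (by linarith)).resolve_left (mul_ne_zero hb hb')
  intro j hj
  interval_cases j <;> simp [e, hM0, hM1, hM2, hM3]

lemma eq_zero_of_sum_div_affine_eq_zero (hcard : Fintype.card ι ≤ 4)
    (hμ : Function.Injective μ) (hc : ∑ r, c r = 0) (hcμ : ∑ r, c r * μ r = 0)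
    {a b a' b' : ℝ} (hb : b ≠ 0) (hb' : b' ≠ 0) (hdet : a * b' - a' * b ≠ 0)
    (hden : ∀ r, a + μ r * b ≠ 0) (hden' : ∀ r, a' + μ r * b' ≠ 0)
    (h : ∑ r, c r / (a + μ r * b) = 0) (h' : ∑ r, c r / (a' + μ r * b') = 0) : c = 0 := by
  have he := eq_zero_of_sum_mul_pow_eq_zero hμ fun j hj =>
    sum_div_mul_mul_pow_eq_zero hc hcμ hb hb' hdet hden hden' h h' j (by omega)
  funext r
  have := congrFun he r
  simpa [hden r, hden' r] using this

end Algebra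

section Collinear

variable {z : ι → Fin m → ℝ} {w d : Fin m → ℝ} {μ c : ι → ℝ}

/-- The vectors `(w k, d k)` with `k ≠ i` span `ℝ²`. -/
def SpansOff (w d : Fin m → ℝ) (i : Fin m) : Prop :=
  ∃ k k', k ≠ i ∧ k' ≠ i ∧ w k * d k' - w k' * d k ≠ 0

lemma spansOff_or_spansOff (hm : 3 ≤ m) (hw : IsPLParam w) (hd : d ≠ 0)
    (hdsum : ∑ k, d k = 0) {i j : Fin m} (hij : i ≠ j) : SpansOff w d i ∨ SpansOff w d j := by
  by_contra! h
  simp only [SpansOff, not_exists, not_and, not_not] at h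
  obtain ⟨hi, hj⟩ := h
  obtain ⟨k₀, hk₀⟩ := Fin.exists_notMem_of_card_lt {i, j} (card_le_two.trans_lt (by omega))
  simp only [mem_insert, mem_singleton, not_or] at hk₀
  have hprop : ∀ k, w k * d k₀ = w k₀ * d k := by
    intro k
    by_cases hki : k = i
    · have := hj k k₀ (hki ▸ hij) hk₀.2; linarith
    · have := hi k k₀ hki hk₀.1; linarith
  have hdk₀ : d k₀ = 0 := by
    have := sum_congr rfl fun k (_ : k ∈ univ) => hprop k
    rwa [← sum_mul, hw.2, one_mul, ← mul_sum, hdsum, mul_zero] at this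
  refine hd (funext fun k => ?_)
  have := hprop k
  rw [hdk₀, mul_zero] at this
  exact (mul_eq_zero.mp this.symm).resolve_left (hw.1 k₀).ne'

lemma exists_spansOff_notMem (hm : 3 ≤ m) (hw : IsPLParam w) (hd : d ≠ 0)
    (hdsum : ∑ k, d k = 0) (s : Finset (Fin m)) (hs : s.card + 2 ≤ m) :
    ∃ q ∉ s, SpansOff w d q := by
  classical
  set B := univ.filter fun k => ¬SpansOff w d k
  have hB : B.card ≤ 1 := card_le_one.mpr fun a ha b hb => by
    by_contra hab
    simp only [B, mem_filter, mem_univ, true_and] at ha hb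
    exact (spansOff_or_spansOff hm hw hd hdsum hab).elim ha hb
  obtain ⟨q, hq⟩ := Fin.exists_notMem_of_card_lt (s ∪ B) ((card_union_le s B).trans_lt (by omega))
  simp only [B, mem_union, mem_filter, mem_univ, true_and, not_or, not_not] at hq
  exact ⟨q, hq⟩

lemma exists_ne_apply_ne_zero (hd : d ≠ 0) (hdsum : ∑ k, d k = 0) :
    ∃ a b, a ≠ b ∧ d a ≠ 0 ∧ d b ≠ 0 := by
  obtain ⟨a, ha⟩ := Function.ne_iff.mp hd
  by_contra! h
  apply ha
  rwa [sum_eq_single a (fun b _ hb => h a b hb.symm ha) (by simp)] at hdsum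

lemma sum_div_pole_eq_zero (hm : 2 ≤ m) (hz : ∀ r, IsPLParam (z r))
    (hline : ∀ r k, z r k = w k + μ r * d k) (h0 : ∑ r, c r = 0) (h2 : TopVanishes 2 z c)
    {i : Fin m} (hi : SpansOff w d i) : ∑ r, c r / ((1 - w i) + μ r * (-d i)) = 0 := by
  obtain ⟨k, k', hk, hk', hdet⟩ := hi
  have hF : ∀ k, k ≠ i → ∑ r, c r * (z r i / (1 - z r i)) * (w k + μ r * d k) = 0 :=
    fun k hk => by simp_rw [← hline]; exact h2.two hk.symm
  have hsum := sum_eq_zero_of_sum_mul_affine_eq_zero hdet (hF k hk) (hF k' hk')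
  have hsplit : ∀ r, c r * (z r i / (1 - z r i)) = c r / ((1 - w i) + μ r * (-d i)) - c r := by
    intro r
    have hlt := (hz r).lt_one hm i
    rw [show (1 - w i) + μ r * (-d i) = 1 - z r i by rw [hline]; ring]
    field_simp [sub_ne_zero.mpr hlt.ne']
    ring
  simpa only [hsplit, sum_sub_distrib, h0, sub_zero] using hsum

lemma eq_zero_of_prefix_pair (hm : 3 ≤ m) (hcard : Fintype.card ι ≤ 4)
    (hz : ∀ r, IsPLParam (z r)) (hline : ∀ r k, z r k = w k + μ r * d k)
    (hμ : Function.Injective μ) (h0 : ∑ r, c r = 0)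
    (hcμ : ∑ r, c r * μ r = 0) (h2 : TopVanishes 2 z c) (h3 : TopVanishes 3 z c)
    {i j l : Fin m} (hij : i ≠ j) (hil : i ≠ l) (hjl : j ≠ l) (hdi : d i ≠ 0)
    (hdij : d i + d j ≠ 0) (hpole : ∑ r, c r / ((1 - w i) + μ r * (-d i)) = 0)
    (hnum : d i * (1 - w j) + d j * w i ≠ 0) (hsep : d i * w j + (1 - w i) * d j ≠ 0)
    (hdet : (1 - w i - w j) * d l + (d i + d j) * w l ≠ 0) : c = 0 := by
  have hA : ∀ r, 1 - z r i = (1 - w i) + μ r * (-d i) := fun r => by rw [hline]; ring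
  have hB : ∀ r, 1 - z r i - z r j = (1 - w i - w j) + μ r * (-(d i + d j)) := fun r => by
    rw [hline, hline]; ring
  have hA0 : ∀ r, 1 - z r i ≠ 0 := fun r => by linarith [(hz r).lt_one (by omega) i]
  have hB0 : ∀ r, 1 - z r i - z r j ≠ 0 := fun r => by linarith [(hz r).add_lt_one hm hij]
  set G : ι → ℝ := fun r => c r * (z r i * z r j / ((1 - z r i) * (1 - z r i - z r j)))
  have hG : ∑ r, G r = 0 := by
    refine sum_eq_zero_of_sum_mul_affine_eq_zero (μ := μ) (a := w l) (b := d l)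
      (a' := 1 - w i - w j) (b' := -(d i + d j)) (fun h => hdet (by linarith)) ?_ ?_
    · simp_rw [← hline]; exact h3.three hij hil hjl
    · rw [← h2.two hij]
      refine sum_congr rfl fun r _ => ?_
      have := hA0 r; have := hB0 r
      rw [← hB]
      simp only [G]
      field_simp
  -- `G` has a second pole, at the zero of `1 - z i - z j`
  have hsplit : ∀ r, G r = c r * ((1 - w j + μ r * (-d j)) /
      ((1 - w i - w j) + μ r * (-(d i + d j)))) - c r / ((1 - w i) + μ r * (-d i)) := fun r => by
    have := hA0 r; have := hB0 r
    rw [← hA, ← hB, show 1 - w j + μ r * (-d j) = 1 - z r j by rw [hline]; ring]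
    simp only [G]
    field_simp
    ring
  have hAne : ∀ r, (1 - w i) + μ r * (-d i) ≠ 0 := fun r => hA r ▸ hA0 r
  have hBne : ∀ r, (1 - w i - w j) + μ r * (-(d i + d j)) ≠ 0 := fun r => hB r ▸ hB0 r
  simp only [hsplit, sum_sub_distrib, hpole, sub_zero] at hG
  have hpole' := sum_div_affine_eq_zero_of_sum_mul_div_eq_zero (neg_ne_zero.mpr hdij)
    (fun h => hnum (by linarith)) hBne h0 hG
  exact eq_zero_of_sum_div_affine_eq_zero hcard hμ h0 hcμ (neg_ne_zero.mpr hdi)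
    (neg_ne_zero.mpr hdij) (fun h => hsep (by linarith)) hAne hBne hpole hpole'

lemma false_of_proportional_off (hm : 4 ≤ m) (hw : IsPLParam w) (hdsum : ∑ k, d k = 0)
    {j₀ p q : Fin m} (hdj₀ : d j₀ = 0) (hpq : p ≠ q) (hqj : q ≠ j₀) (hdp : d p ≠ 0)
    (hp : ∀ l, l ≠ p → l ≠ j₀ → (1 - w p - w j₀) * d l + d p * w l = 0)
    (hq : ∀ l, l ≠ q → l ≠ j₀ → (1 - w q - w j₀) * d l + d q * w l = 0) : False := by
  have hnz : ∀ l, l ≠ p → l ≠ j₀ → d l ≠ 0 := fun l hlp hlj hl => by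
    have := hp l hlp hlj
    rw [hl, mul_zero, zero_add] at this
    exact mul_ne_zero hdp (hw.1 l).ne' this
  obtain ⟨k₀, hk₀⟩ := Fin.exists_notMem_of_card_lt {p, q, j₀} (card_le_three.trans_lt (by omega))
  simp only [mem_insert, mem_singleton, not_or] at hk₀
  -- `d` is proportional to `w` off `j₀`, which contradicts `∑ k, d k = 0`
  have hprop : ∀ k, k ≠ j₀ → w k * d k₀ = w k₀ * d k := by
    intro k hkj
    have cross : ∀ x, d x ≠ 0 → x ≠ k → x ≠ k₀ →
        (∀ l, l ≠ x → l ≠ j₀ → (1 - w x - w j₀) * d l + d x * w l = 0) →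
        w k * d k₀ = w k₀ * d k := fun x hdx hxk hxk₀ hx => by
      have e := hx k (Ne.symm hxk) hkj
      have e₀ := hx k₀ (Ne.symm hxk₀) hk₀.2.2
      exact mul_left_cancel₀ hdx (by linear_combination d k₀ * e - d k * e₀)
    by_cases hkp : k = p
    · exact cross q (hnz q (Ne.symm hpq) hqj) (hkp ▸ Ne.symm hpq) (Ne.symm hk₀.2.1) hq
    · exact cross p hdp (Ne.symm hkp) (Ne.symm hk₀.1) hp
  have hsum := sum_eq_single (f := fun k => w k * d k₀ - w k₀ * d k) (s := univ) j₀
    (fun k _ hk => sub_eq_zero.mpr (hprop k hk)) (by simp)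
  rw [sum_sub_distrib, ← sum_mul, ← mul_sum, hw.2, hdsum, hdj₀] at hsum
  have hk₀0 : d k₀ * (1 - w j₀) = 0 := by linear_combination hsum
  exact hnz k₀ hk₀.1 hk₀.2.2
    ((mul_eq_zero.mp hk₀0).resolve_right (sub_ne_zero.mpr (hw.lt_one (by omega) j₀).ne'))

lemma eq_zero_of_collinear_of_apply_eq_zero (hm : 4 ≤ m) (hcard : Fintype.card ι ≤ 4)
    (hz : ∀ r, IsPLParam (z r)) (hline : ∀ r k, z r k = w k + μ r * d k)
    (hμ : Function.Injective μ) (hw : IsPLParam w) (hd : d ≠ 0) (hdsum : ∑ k, d k = 0)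
    (h0 : ∑ r, c r = 0) (hcμ : ∑ r, c r * μ r = 0) (h2 : TopVanishes 2 z c)
    (h3 : TopVanishes 3 z c) {j₀ : Fin m} (hdj₀ : d j₀ = 0) : c = 0 := by
  by_contra hc
  -- otherwise the prefix `(p, j₀)` has a second pole
  have hrel : ∀ p, SpansOff w d p → d p ≠ 0 → ∀ l, l ≠ p → l ≠ j₀ →
      (1 - w p - w j₀) * d l + d p * w l = 0 := by
    intro p hp hdp l hlp hlj
    by_contra hdet
    refine hc (eq_zero_of_prefix_pair (by omega) hcard hz hline hμ h0 hcμ h2 h3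
      (fun h : p = j₀ => hdp (h ▸ hdj₀)) (Ne.symm hlp) (Ne.symm hlj) hdp (by rwa [hdj₀, add_zero])
      (sum_div_pole_eq_zero (by omega) hz hline h0 h2 hp) ?_ ?_ (by rwa [hdj₀, add_zero]))
    · rw [hdj₀, zero_mul, add_zero]
      exact mul_ne_zero hdp (sub_ne_zero.mpr (hw.lt_one (by omega) j₀).ne')
    · rw [hdj₀, mul_zero, add_zero]
      exact mul_ne_zero hdp (hw.1 j₀).ne'
  obtain ⟨a, b, hab, hda, hdb⟩ := exists_ne_apply_ne_zero hd hdsum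
  obtain ⟨p, hdp, hp⟩ : ∃ p, d p ≠ 0 ∧ SpansOff w d p :=
    (spansOff_or_spansOff (by omega) hw hd hdsum hab).elim (fun h => ⟨a, hda, h⟩)
      fun h => ⟨b, hdb, h⟩
  obtain ⟨q, hq, hqs⟩ := exists_spansOff_notMem (by omega) hw hd hdsum {p, j₀}
    (by have := card_le_two (a := p) (b := j₀); omega)
  simp only [mem_insert, mem_singleton, not_or] at hq
  have hdq : d q ≠ 0 := fun h => by
    have := hrel p hp hdp q hq.1 hq.2
    rw [h, mul_zero, zero_add] at this
    exact mul_ne_zero hdp (hw.1 q).ne' this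
  exact false_of_proportional_off hm hw hdsum hdj₀ (Ne.symm hq.1) hq.2 hdp (hrel p hp hdp)
    (hrel q hqs hdq)

lemma eq_zero_of_equal_poles (hm : 4 ≤ m) (hcard : Fintype.card ι ≤ 4)
    (hz : ∀ r, IsPLParam (z r)) (hline : ∀ r k, z r k = w k + μ r * d k)
    (hμ : Function.Injective μ) (hw : IsPLParam w) (h0 : ∑ r, c r = 0)
    (hcμ : ∑ r, c r * μ r = 0) (h2 : TopVanishes 2 z c) (h3 : TopVanishes 3 z c)
    {x y u : Fin m} (hxy : x ≠ y) (hxu : x ≠ u) (hyu : y ≠ u) (hdx : d x ≠ 0) (hdy : d y ≠ 0)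
    (hx : SpansOff w d x) (rxy : (1 - w x) * d y = (1 - w y) * d x)
    (rxu : (1 - w x) * d u = (1 - w u) * d x) (ryu : (1 - w y) * d u = (1 - w u) * d y)
    (hdet : d x + d y - d u ≠ 0) : c = 0 := by
  have hdxy : d x + d y ≠ 0 := fun h => hdx <| by
    have hlt := hw.add_lt_one (by omega) hxy
    have : d x * (2 - w x - w y) = 0 := by linear_combination (1 - w x) * h - rxy
    exact (mul_eq_zero.mp this).resolve_right (by linarith)
  exact eq_zero_of_prefix_pair (by omega) hcard hz hline hμ h0 hcμ h2 h3 hxy hxu hyu hdx hdxy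
    (sum_div_pole_eq_zero (by omega) hz hline h0 h2 hx)
    (by rw [show d x * (1 - w y) + d y * w x = d y by linear_combination -rxy]; exact hdy)
    (by rw [show d x * w y + (1 - w x) * d y = d x by linear_combination rxy]; exact hdx)
    (by rwa [show (1 - w x - w y) * d u + (d x + d y) * w u = d x + d y - d u by
      linear_combination rxu + ryu])

lemma eq_zero_of_collinear_of_forall_ne_zero (hm : 4 ≤ m) (hcard : Fintype.card ι ≤ 4)
    (hz : ∀ r, IsPLParam (z r)) (hline : ∀ r k, z r k = w k + μ r * d k)
    (hμ : Function.Injective μ) (hw : IsPLParam w) (hdsum : ∑ k, d k = 0)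
    (h0 : ∑ r, c r = 0) (hcμ : ∑ r, c r * μ r = 0) (h2 : TopVanishes 2 z c)
    (h3 : TopVanishes 3 z c) (hd0 : ∀ k, d k ≠ 0) : c = 0 := by
  have hd : d ≠ 0 := fun h => hd0 ⟨0, by omega⟩ (congrFun h _)
  obtain ⟨i, -, hi⟩ := exists_spansOff_notMem (by omega) hw hd hdsum ∅ (by simp; omega)
  obtain ⟨j, hj, hj'⟩ := exists_spansOff_notMem (by omega) hw hd hdsum {i} (by simp; omega)
  obtain ⟨l, hl, hl'⟩ := exists_spansOff_notMem (by omega) hw hd hdsum {i, j}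
    (by have := card_le_two (a := i) (b := j); omega)
  simp only [mem_insert, mem_singleton, not_or] at hj hl
  have hden : ∀ x r, (1 - w x) + μ r * (-d x) ≠ 0 := fun x r => by
    rw [show (1 - w x) + μ r * (-d x) = 1 - z r x by rw [hline]; ring]
    linarith [(hz r).lt_one (by omega) x]
  by_contra hc
  -- the poles `(1 - w x) / d x` of all spanning indices coincide
  have hrel : ∀ x y, SpansOff w d x → SpansOff w d y → (1 - w x) * d y = (1 - w y) * d x :=
    fun x y hx hy => by
      by_contra h
      exact hc (eq_zero_of_sum_div_affine_eq_zero hcard hμ h0 hcμ (neg_ne_zero.mpr (hd0 x))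
        (neg_ne_zero.mpr (hd0 y)) (fun h' => h (by linarith)) (hden x) (hden y)
        (sum_div_pole_eq_zero (by omega) hz hline h0 h2 hx)
        (sum_div_pole_eq_zero (by omega) hz hline h0 h2 hy))
  have rij := hrel i j hi hj'
  have ril := hrel i l hi hl'
  have rjl := hrel j l hj' hl'
  by_cases h₁ : d i + d j - d l = 0
  · by_cases h₂ : d i + d l - d j = 0
    · exact hd0 i (by linarith)
    · exact hc (eq_zero_of_equal_poles hm hcard hz hline hμ hw h0 hcμ h2 h3 (Ne.symm hl.1)
        (Ne.symm hj) hl.2 (hd0 i) (hd0 l) hi ril rij rjl.symm h₂)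
  · exact hc (eq_zero_of_equal_poles hm hcard hz hline hμ hw h0 hcμ h2 h3 (Ne.symm hj)
      (Ne.symm hl.1) (Ne.symm hl.2) (hd0 i) (hd0 j) hi rij ril rjl h₁)

theorem eq_zero_of_collinear (hm : 4 ≤ m) (hcard : Fintype.card ι ≤ 4)
    (hz : ∀ r, IsPLParam (z r)) (hline : ∀ r k, z r k = w k + μ r * d k)
    (hμ : Function.Injective μ) (hw : IsPLParam w) (hd : d ≠ 0) (hdsum : ∑ k, d k = 0)
    (h3 : TopVanishes 3 z c) : c = 0 := by
  have h2 := h3.of_succ hz (by omega)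
  have h1 := h2.of_succ hz (by omega)
  have h0 := (h1.of_succ hz (by omega)).sum_eq_zero
  have hcμ : ∑ r, c r * μ r = 0 := by
    obtain ⟨k, hk⟩ := Function.ne_iff.mp hd
    have := congrFun h1.sum_smul_eq_zero k
    simp only [Finset.sum_apply, Pi.smul_apply, smul_eq_mul, hline, Pi.zero_apply] at this
    rw [sum_mul_affine, h0, mul_zero, zero_add] at this
    exact (mul_eq_zero.mp this).resolve_left hk
  by_cases h : ∃ j₀, d j₀ = 0
  · obtain ⟨j₀, hj₀⟩ := h
    exact eq_zero_of_collinear_of_apply_eq_zero hm hcard hz hline hμ hw hd hdsum h0 hcμ h2 h3 hj₀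
  · push Not at h
    exact eq_zero_of_collinear_of_forall_ne_zero hm hcard hz hline hμ hw hdsum h0 hcμ h2 h3 h

end Collinear

variable {z : ι → Fin m → ℝ} {c : ι → ℝ}

lemma false_of_topVanishes_three (hm : 4 ≤ m) (hcard : Fintype.card ι ≤ 4)
    (hz : Function.Injective z) (hPL : ∀ r, IsPLParam (z r)) (hc : ∀ r, c r ≠ 0) (r₀ : ι)
    (h3 : TopVanishes 3 z c) : False := by
  have h2 := h3.of_succ hPL (by omega)
  have h1 := h2.of_succ hPL (by omega)
  have hdep := h1.sum_smul_eq_zero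
  obtain ⟨r₁, h01⟩ : ∃ r₁, r₀ ≠ r₁ := by
    by_contra! h
    have := (h1.of_succ hPL (by omega)).sum_eq_zero
    rw [sum_eq_single r₀ (fun r _ hr => absurd (h r).symm hr) (by simp)] at this
    exact hc r₀ this
  rcases forall_eq_smul_or_collinear hcard hz (fun r => (hPL r).2) hc hdep with
    hprop | hcol
  · exact hz.ne h01 (eq_of_forall_eq_smul (by omega) (hcard.trans hm) hPL hc hdep h2 hprop r₀ r₁)
  · choose μ hμ using hcol r₀ r₁ h01
    have hline : ∀ r k, z r k = z r₀ k + μ r * (z r₁ - z r₀) k := fun r k => by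
      simpa using congrFun (hμ r) k
    have hμinj : Function.Injective μ := fun a b hab => hz (by rw [hμ a, hμ b, hab])
    have hsum : ∑ k, (z r₁ - z r₀) k = 0 := by
      simp only [Pi.sub_apply, sum_sub_distrib, (hPL r₁).2, (hPL r₀).2, sub_self]
    exact hc r₀ (congrFun (eq_zero_of_collinear hm hcard hPL hline hμinj (hPL r₀)
      (sub_ne_zero.mpr (hz.ne (Ne.symm h01))) hsum h3) r₀)

theorem eq_zero_of_topVanishes_three (hm : 4 ≤ m) (hcard : Fintype.card ι ≤ 4)
    (hz : Function.Injective z) (hPL : ∀ r, IsPLParam (z r)) (h3 : TopVanishes 3 z c) :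
    c = 0 := by
  classical
  funext r₀
  by_contra hr₀
  let κ := {r // c r ≠ 0}
  refine false_of_topVanishes_three (ι := κ) (z := fun r => z r) (c := fun r => c r) hm
    ((Fintype.card_subtype_le _).trans hcard) (hz.comp Subtype.val_injective) (fun r => hPL r)
    (fun r => r.2) ⟨r₀, hr₀⟩ fun σ hσ => ?_
  calc ∑ r : κ, c r * PLtop (z r) σ
      = ∑ r ∈ univ.filter fun r => c r ≠ 0, c r * PLtop (z r) σ :=
        (sum_subtype _ (by simp) (fun r => c r * PLtop (z r) σ)).symm
    _ = ∑ r, c r * PLtop (z r) σ := sum_filter_of_ne fun r _ h => left_ne_zero_of_mul h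
    _ = 0 := h3 σ hσ

end TwoPL

open TwoPL

theorem twoPL_identifiable_top3_general
    (m : ℕ) (hm : 4 ≤ m)
    (α α' : ℝ)
    (θ1 θ2 θ1' θ2' : Fin m → ℝ)
    (hθ1 : IsPLParam θ1) (hθ2 : IsPLParam θ2)
    (hθ1' : IsPLParam θ1') (hθ2' : IsPLParam θ2')
    (heq : ∀ σ : Fin 3 → Fin m, Function.Injective σ →
      α * PLtop θ1 σ + (1 - α) * PLtop θ2 σ
        = α' * PLtop θ1' σ + (1 - α') * PLtop θ2' σ) :
    mixing2 α θ1 θ2 = mixing2 α' θ1' θ2' := by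
  set S : Finset (Fin m → ℝ) := {θ1, θ2, θ1', θ2'}
  have hPL : ∀ t : S, IsPLParam (t : Fin m → ℝ) := fun ⟨t, ht⟩ => by
    simp only [S, mem_insert, mem_singleton] at ht
    rcases ht with rfl | rfl | rfl | rfl <;> assumption
  have hdiff := eq_zero_of_topVanishes_three (z := Subtype.val)
    (c := fun t : S => mixing2 α θ1 θ2 t - mixing2 α' θ1' θ2' t) hm
    ((Fintype.card_coe S).trans_le card_le_four) Subtype.val_injective hPL fun σ hσ => by
      rw [sum_coe_sort S fun t => (mixing2 α θ1 θ2 t - mixing2 α' θ1' θ2' t) * PLtop t σ]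
      simp only [sub_mul, sum_sub_distrib]
      rw [sum_mixing2_mul α (by simp [S]) (by simp [S]), sum_mixing2_mul α' (by simp [S])
        (by simp [S]), heq σ hσ, sub_self]
  funext t
  by_cases ht : t ∈ S
  · exact sub_eq_zero.mp (congrFun hdiff ⟨t, ht⟩)
  · simp only [S, mem_insert, mem_singleton, not_or] at ht
    simp [mixing2, Ne.symm ht.1, Ne.symm ht.2.1, Ne.symm ht.2.2.1, Ne.symm ht.2.2.2]

/-- **Identifiability of 2-PL from ranked top-3 data** (Theorem 2(a)): over
`m ≥ 4` alternatives, if two 2-PL parameters assign the same marginal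
probability to every ranked top-3 order, then their mixing measures coincide. -/
theorem twoPL_identifiable_top3
    (m : ℕ) (hm : 4 ≤ m)
    (α α' : ℝ) (hα : 0 < α ∧ α < 1) (hα' : 0 < α' ∧ α' < 1)
    (θ1 θ2 θ1' θ2' : Fin m → ℝ)
    (hθ1 : IsPLParam θ1) (hθ2 : IsPLParam θ2)
    (hθ1' : IsPLParam θ1') (hθ2' : IsPLParam θ2')
    (heq : ∀ σ : Fin 3 → Fin m, Function.Injective σ →
      α * PLtop θ1 σ + (1 - α) * PLtop θ2 σ
        = α' * PLtop θ1' σ + (1 - α') * PLtop θ2' σ) :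
    mixing2 α θ1 θ2 = mixing2 α' θ1' θ2' :=
  twoPL_identifiable_top3_general m hm α α' θ1 θ2 θ1' θ2' hθ1 hθ2 hθ1' hθ2' heq
end

section
/- Let m ≥ 4. If two 2-PL parameters (α, θ^(1), θ^(2)) and (α', θ'^(1), θ'^(2)), with α, α' ∈ (0,1), assign the same marginal probability to every ranked top-2 order a_{i_1} ≻ a_{i_2} ≻ others and to every 2-way order a_i ≻ a_j over every pair {a_i, a_j}, then their mixing measures coincide: α δ_{θ^(1)} + (1−α) δ_{θ^(2)} = α' δ_{θ'^(1)} + (1−α') δ_{θ'^(2)}. In other words, the mixture of two Plackett-Luce models over m ≥ 4 alternatives is identifiable (modulo label switching) from ranked top-2 data plus pairwise comparison data. -/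
/-!
Summing the top-2 probabilities of `a_i ≻ a_j` over `j` gives `θ_i`, so both mixtures have the
same mean `s`. Since the top-2 probability of `a_i ≻ a_j` is `θ_j · θ_i / (1 - θ_i)`, its mixture
mean splits as `s_j E_i + p_j F_i + r_j G_i` with `p = θ⁽¹⁾ - θ⁽²⁾`, `r = θ'⁽¹⁾ - θ'⁽²⁾`, and
`F_i = 0 ↔ p_i = 0`, `G_i = 0 ↔ r_i = 0`; for `m ≥ 4` these relations force `p ∥ r`. So all four
parameters lie on one line `s + t • q`, and it remains to show that the signed measure
`ν = α δ_{t₁} + (1 - α) δ_{t₂} - α' δ_{t₁'} - (1 - α') δ_{t₂'}` on `ℝ` vanishes.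
It annihilates `1`, `t`, and, by the top-2 data, `1 / (1 - s_i - t q_i)` for all `i` but at most
one pivot. Two of these poles differ unless all parameters are constant off the pivot, and then
the pairwise data supply the pole of `1 / (1 - (m - 2)(s_j + t q_j))`. Two distinct poles
together with `1` and `t` separate four points (divide by the two linear factors and interpolate
by cubics), so `ν = 0`.
-/

open Finset

open Polynomial in
theorem Finset.eq_zero_of_forall_sum_mul_pow_eq_zero {F : Type*} [Field F] [DecidableEq F]
    {S : Finset F} {w : F → F} (h : ∀ k < #S, ∑ t ∈ S, w t * t ^ k = 0) :
    ∀ t ∈ S, w t = 0 := by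
  intro t ht
  set P := Lagrange.basis S id t
  have hinj : Set.InjOn id (S : Set F) := Set.injOn_id _
  have hP : P.natDegree < #S := by
    rw [Lagrange.natDegree_basis hinj ht]
    exact Nat.sub_lt (card_pos.mpr ⟨t, ht⟩) one_pos
  calc w t = ∑ u ∈ S, w u * P.eval u := by
        rw [sum_eq_single t (fun u hu hut => by
          rw [show u = id u from rfl, Lagrange.eval_basis_of_ne hut.symm hu, mul_zero])
          (fun h => absurd ht h)]
        rw [show P.eval t = P.eval (id t) from rfl, Lagrange.eval_basis_self hinj ht, mul_one]
    _ = ∑ k ∈ range #S, P.coeff k * ∑ u ∈ S, w u * u ^ k := by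
        simp_rw [eval_eq_sum_range' hP, mul_sum]
        rw [sum_comm]
        exact sum_congr rfl fun _ _ => sum_congr rfl fun _ _ => by ring
    _ = 0 := sum_eq_zero fun k hk => by rw [h k (mem_range.mp hk), mul_zero]

theorem Finsupp.eq_zero_of_sum_div_sub_mul_eq_zero {ν : ℝ →₀ ℝ} (hcard : #ν.support ≤ 4)
    {σ₁ τ₁ σ₂ τ₂ : ℝ} (hτ₁ : τ₁ ≠ 0) (hτ₂ : τ₂ ≠ 0) (hdet : σ₁ * τ₂ ≠ σ₂ * τ₁)
    (hℓ₁ : ∀ t ∈ ν.support, σ₁ - t * τ₁ ≠ 0) (hℓ₂ : ∀ t ∈ ν.support, σ₂ - t * τ₂ ≠ 0)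
    (h0 : ∑ t ∈ ν.support, ν t = 0) (h1 : ∑ t ∈ ν.support, ν t * t = 0)
    (h2 : ∑ t ∈ ν.support, ν t / (σ₁ - t * τ₁) = 0)
    (h3 : ∑ t ∈ ν.support, ν t / (σ₂ - t * τ₂) = 0) :
    ν = 0 := by
  set S := ν.support
  -- Against the weights `v = ν / (ℓ₁ ℓ₂)`, `ℓᵢ = σᵢ - t τᵢ`, the four test functions become the
  -- cubics `ℓ₁ ℓ₂`, `t ℓ₁ ℓ₂`, `ℓ₂`, `ℓ₁`, which span all cubics.
  set v : ℝ → ℝ := fun t => ν t / ((σ₁ - t * τ₁) * (σ₂ - t * τ₂))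
  set M : ℕ → ℝ := fun k => ∑ t ∈ S, v t * t ^ k
  have cubic {g : ℝ → ℝ} (a b c d : ℝ)
      (hg : ∀ t ∈ S, g t * ((σ₁ - t * τ₁) * (σ₂ - t * τ₂))
        = ν t * (a + b * t + c * t ^ 2 + d * t ^ 3)) :
      ∑ t ∈ S, g t = a * M 0 + b * M 1 + c * M 2 + d * M 3 := by
    simp only [M, Finset.mul_sum, ← Finset.sum_add_distrib]
    refine Finset.sum_congr rfl fun t ht => ?_
    rw [← mul_div_cancel_right₀ (g t) (mul_ne_zero (hℓ₁ t ht) (hℓ₂ t ht)), hg t ht]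
    ring
  have e0 := (cubic (σ₁ * σ₂) (-(σ₁ * τ₂ + σ₂ * τ₁)) (τ₁ * τ₂) 0 fun t _ => by ring).symm.trans h0
  have e1 := (cubic 0 (σ₁ * σ₂) (-(σ₁ * τ₂ + σ₂ * τ₁)) (τ₁ * τ₂) fun t _ => by ring).symm.trans h1
  have e2 := (cubic σ₂ (-τ₂) 0 0 fun t ht => by field_simp [hℓ₁ t ht]; ring).symm.trans h2
  have e3 := (cubic σ₁ (-τ₁) 0 0 fun t ht => by field_simp [hℓ₂ t ht]; ring).symm.trans h3
  have hdet' : σ₁ * τ₂ - σ₂ * τ₁ ≠ 0 := sub_ne_zero.mpr hdet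
  have hM0 : M 0 = 0 :=
    (mul_eq_zero.mp (by linear_combination τ₂ * e3 - τ₁ * e2)).resolve_left hdet'
  have hM1 : M 1 = 0 :=
    (mul_eq_zero.mp (by linear_combination σ₂ * e3 - σ₁ * e2)).resolve_left hdet'
  have hM2 : M 2 = 0 := (mul_eq_zero.mp (by
    linear_combination e0 - σ₁ * σ₂ * hM0 + (σ₁ * τ₂ + σ₂ * τ₁) * hM1)).resolve_left
    (mul_ne_zero hτ₁ hτ₂)
  have hM3 : M 3 = 0 := (mul_eq_zero.mp (by
    linear_combination e1 - σ₁ * σ₂ * hM1 + (σ₁ * τ₂ + σ₂ * τ₁) * hM2)).resolve_left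
    (mul_ne_zero hτ₁ hτ₂)
  have hv := eq_zero_of_forall_sum_mul_pow_eq_zero (S := S) (w := v) fun k hk => by
    have := hk.trans_le hcard
    interval_cases k <;> assumption
  ext t
  by_contra ht
  have ht' := Finsupp.mem_support_iff.mpr ht
  exact ht (by simpa [v, hℓ₁ t ht', hℓ₂ t ht'] using hv t ht')

section Mixture

variable {X Y : Type*}

noncomputable def mix (α : ℝ) (x y : X) : X →₀ ℝ :=
  Finsupp.single x α + Finsupp.single y (1 - α)

def mixMean (α : ℝ) (x y : X) (f : X → ℝ) : ℝ :=
  α * f x + (1 - α) * f y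

theorem coe_mix {m : ℕ} (α : ℝ) (x y : Fin m → ℝ) : ⇑(mix α x y) = mixing2 α x y := by
  ext t
  simp only [mix, mixing2, Finsupp.coe_add, Pi.add_apply, Finsupp.single_apply]

theorem mapDomain_mix (f : X → Y) (α : ℝ) (x y : X) :
    (mix α x y).mapDomain f = mix α (f x) (f y) := by
  simp only [mix, Finsupp.mapDomain_add, Finsupp.mapDomain_single]

theorem mix_self (α : ℝ) (x : X) : mix α x x = Finsupp.single x 1 := by
  rw [mix, ← Finsupp.single_add, add_sub_cancel]

theorem support_mix_sub_mix_subset [DecidableEq X] (α α' : ℝ) (x y x' y' : X) :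
    (mix α x y - mix α' x' y').support ⊆ {x, y, x', y'} := by
  refine Finsupp.support_sub.trans (union_subset ?_ ?_) <;>
    refine Finsupp.support_add.trans (union_subset ?_ ?_) <;>
    exact Finsupp.support_single_subset.trans (by simp)

theorem sum_support_mix_sub_mix (α α' : ℝ) (x y x' y' : X) (f : X → ℝ) :
    ∑ z ∈ (mix α x y - mix α' x' y').support, (mix α x y - mix α' x' y') z * f z
      = mixMean α x y f - mixMean α' x' y' f := by
  change Finsupp.sum _ (fun z c => c * f z) = _
  rw [Finsupp.sum_sub_index (fun _ _ _ => sub_mul _ _ _)]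
  simp only [mix, mixMean]
  rw [Finsupp.sum_add_index' (fun _ => zero_mul _) (fun _ _ _ => add_mul _ _ _),
    Finsupp.sum_add_index' (fun _ => zero_mul _) (fun _ _ _ => add_mul _ _ _)]
  simp only [Finsupp.sum_single_index, zero_mul]

theorem mixMean_mul (α : ℝ) (x y : X) (f g : X → ℝ) :
    mixMean α x y (fun z => f z * g z)
      = mixMean α x y f * mixMean α x y g + α * (1 - α) * (f x - f y) * (g x - g y) := by
  simp only [mixMean]
  ring

theorem eq_add_smul_of_sub_eq_smul {E : Type*} [AddCommGroup E] [Module ℝ E] {x y q : E}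
    {c : ℝ} (α : ℝ) (h : x - y = c • q) :
    x = (α • x + (1 - α) • y) + ((1 - α) * c) • q ∧
      y = (α • x + (1 - α) • y) + (-α * c) • q := by
  rw [mul_smul, mul_smul, ← h]
  constructor <;> module

end Mixture

section PlackettLuce

variable {m : ℕ} {θ : Fin m → ℝ}

theorem IsPLParam.lt_one_s3 (hθ : IsPLParam θ) (hm : 2 ≤ m) (i : Fin m) : θ i < 1 := by
  have : Nontrivial (Fin m) := Fin.nontrivial_iff_two_le.mpr hm
  obtain ⟨j, hj⟩ := exists_ne i
  rw [← hθ.2]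
  exact single_lt_sum hj (mem_univ i) (mem_univ j) (hθ.1 j) fun k _ _ => (hθ.1 k).le

theorem convex_setOf_isPLParam : Convex ℝ {θ : Fin m → ℝ | IsPLParam θ} := by
  intro x hx y hy a b ha hb hab
  refine ⟨fun i => ?_, ?_⟩
  · have := hx.1 i
    have := hy.1 i
    simp only [Pi.add_apply, Pi.smul_apply, smul_eq_mul]
    rcases ha.eq_or_lt with rfl | ha
    · rw [zero_add] at hab
      simpa [hab]
    · positivity
  · simp only [Pi.add_apply, Pi.smul_apply, smul_eq_mul, sum_add_distrib, ← mul_sum, hx.2, hy.2]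
    linarith

theorem PLtop_pair (θ : Fin m → ℝ) (i j : Fin m) :
    PLtop θ ![i, j] = θ i / (1 - θ i) * θ j := by
  have h0 : univ.filter (fun q : Fin 2 => q < 0) = ∅ := by decide
  have h1 : univ.filter (fun q : Fin 2 => q < 1) = {0} := by decide
  rw [PLtop, Fin.prod_univ_two, h0, h1]
  simp only [sum_empty, sub_zero, div_one, sum_singleton, Matrix.cons_val_zero,
    Matrix.cons_val_one]
  ring

theorem IsPLParam.sum_PLtop_pair (hθ : IsPLParam θ) (hm : 2 ≤ m) (i : Fin m) :
    ∑ j ∈ univ.erase i, PLtop θ ![i, j] = θ i := by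
  have hi : 1 - θ i ≠ 0 := sub_ne_zero.mpr (hθ.lt_one_s3 hm i).ne'
  simp only [PLtop_pair, ← mul_sum, sum_erase_eq_sub (mem_univ i), hθ.2]
  field_simp

theorem IsPLParam.add_eq_of_forall_ne (hθ : IsPLParam θ) {i₀ j : Fin m}
    (h : ∀ l, l ≠ i₀ → θ l = θ j) : θ j + θ i₀ = 1 - ((m : ℝ) - 2) * θ j := by
  have hsum := hθ.2
  rw [← add_sum_erase univ θ (mem_univ i₀), sum_congr rfl fun l hl => h l (ne_of_mem_erase hl),
    sum_const, card_erase_of_mem (mem_univ _), card_univ, Fintype.card_fin, nsmul_eq_mul,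
    Nat.cast_sub (Fin.pos j)] at hsum
  push_cast at hsum
  linarith

theorem smul_add_smul_eq_of_top2 (hm : 2 ≤ m) {α α' : ℝ} {x y x' y' : Fin m → ℝ}
    (hx : IsPLParam x) (hy : IsPLParam y) (hx' : IsPLParam x') (hy' : IsPLParam y')
    (htop : ∀ i j, i ≠ j →
      mixMean α x y (PLtop · ![i, j]) = mixMean α' x' y' (PLtop · ![i, j])) :
    α • x + (1 - α) • y = α' • x' + (1 - α') • y' := by
  have key : ∀ {β : ℝ} {z w : Fin m → ℝ}, IsPLParam z → IsPLParam w → ∀ i,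
      (β • z + (1 - β) • w) i = ∑ j ∈ univ.erase i, mixMean β z w (PLtop · ![i, j]) := by
    intro β z w hz hw i
    simp only [Pi.add_apply, Pi.smul_apply, smul_eq_mul, mixMean, sum_add_distrib, ← mul_sum,
      hz.sum_PLtop_pair hm, hw.sum_PLtop_pair hm]
  ext i
  rw [key hx hy, key hx' hy']
  exact sum_congr rfl fun j hj => htop i j (ne_of_mem_erase hj).symm

end PlackettLuce

theorem Fintype.exists_ne_of_four_le_card {ι : Type*} [Fintype ι] [DecidableEq ι]
    (hι : 4 ≤ Fintype.card ι) (a b c : ι) : ∃ d, d ≠ a ∧ d ≠ b ∧ d ≠ c := by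
  obtain ⟨d, -, hd⟩ := exists_mem_notMem_of_card_lt_card
    ((card_le_three (a := a) (b := b) (c := c)).trans_lt (by rw [card_univ]; omega))
  simp only [mem_insert, mem_singleton, not_or] at hd
  exact ⟨d, hd⟩

theorem mul_eq_mul_of_orthogonal_off_diag {ι : Type*} [Fintype ι] [DecidableEq ι]
    (hι : 4 ≤ Fintype.card ι) {s p r E F G : ι → ℝ} (hs : ∀ i, s i ≠ 0) (hs1 : ∑ i, s i ≠ 0)
    (hp : ∑ i, p i = 0) (hr : ∑ i, r i = 0)
    (horth : ∀ i j, i ≠ j → s j * E i + p j * F i + r j * G i = 0)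
    (hF : ∀ i, F i = 0 → p i = 0) (hG : ∀ i, G i = 0 → r i = 0) (a b : ι) :
    p a * r b = p b * r a := by
  by_contra hne
  have hD : p a * r b - p b * r a ≠ 0 := sub_ne_zero.mpr hne
  have hab : a ≠ b := by rintro rfl; exact hne rfl
  -- `N l` is the triple product of the rows `(s, p, r)` at `l`, `a` and `b`.
  set N : ι → ℝ := fun l => s l * (p a * r b - p b * r a) + p l * (r a * s b - s a * r b)
    + r l * (s a * p b - p a * s b)
  have hN : ∀ i, i ≠ a → i ≠ b → ∀ l, l ≠ i → E i * N l = 0 := by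
    intro i hia hib l hli
    linear_combination (p a * r b - p b * r a) * horth i l hli.symm
      - p l * (r b * horth i a hia - r a * horth i b hib)
      + r l * (p b * horth i a hia - p a * horth i b hib)
  have hpr : ∀ i, i ≠ a → i ≠ b → E i = 0 → p i = 0 ∧ r i = 0 := by
    intro i hia hib hE
    refine ⟨hF i ?_, hG i ?_⟩ <;> apply (mul_eq_zero.mp _).resolve_left hD
    · linear_combination r b * horth i a hia - r a * horth i b hib + (r a * s b - s a * r b) * hE
    · linear_combination p a * horth i b hib - p b * horth i a hia + (s a * p b - p a * s b) * hE
  have hsumN : ∑ l, N l = (p a * r b - p b * r a) * ∑ l, s l := by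
    simp only [N, sum_add_distrib, ← sum_mul, hp, hr]
    ring
  have hE : ∀ i, i ≠ a → i ≠ b → E i = 0 := by
    intro i hia hib
    by_contra hEi
    obtain ⟨i', hi'a, hi'b, hi'i⟩ := Fintype.exists_ne_of_four_le_card hι a b i
    have hNi : ∀ l, l ≠ i → N l = 0 := fun l hl =>
      (mul_eq_zero.mp (hN i hia hib l hl)).resolve_left hEi
    have hEi' : E i' ≠ 0 := by
      intro h0
      obtain ⟨hp0, hr0⟩ := hpr i' hi'a hi'b h0
      exact mul_ne_zero (hs i') hD (by simpa [N, hp0, hr0] using hNi i' hi'i)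
    have hN0 : ∀ l, N l = 0 := by
      intro l
      rcases eq_or_ne l i with rfl | hl
      · exact (mul_eq_zero.mp (hN i' hi'a hi'b l hi'i.symm)).resolve_left hEi'
      · exact hNi l hl
    exact mul_ne_zero hD hs1 (by rw [← hsumN, sum_eq_zero fun l _ => hN0 l])
  have hoff : ∀ i, i ≠ a ∧ i ≠ b → p i = 0 ∧ r i = 0 := fun i hi =>
    hpr i hi.1 hi.2 (hE i hi.1 hi.2)
  have hpab : p a + p b = 0 := by rw [← hp, Fintype.sum_eq_add a b hab fun i hi => (hoff i hi).1]
  have hrab : r a + r b = 0 := by rw [← hr, Fintype.sum_eq_add a b hab fun i hi => (hoff i hi).2]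
  exact hD (by linear_combination r b * hpab - p b * hrab)

theorem exists_smul_eq_of_mul_eq_mul {ι : Type*} [Fintype ι] {p r : ι → ℝ}
    (h : ∀ a b, p a * r b = p b * r a) (hp : ∑ i, p i = 0) (hr : ∑ i, r i = 0) :
    ∃ q : ι → ℝ, ∑ i, q i = 0 ∧ ∃ c c' : ℝ, p = c • q ∧ r = c' • q := by
  by_cases hp0 : p = 0
  · exact ⟨r, hr, 0, 1, by rw [hp0, zero_smul], (one_smul ℝ r).symm⟩
  obtain ⟨a, ha⟩ := Function.ne_iff.mp hp0
  refine ⟨p, hp, 1, r a / p a, (one_smul ℝ p).symm, funext fun b => ?_⟩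
  rw [Pi.smul_apply, smul_eq_mul, div_mul_eq_mul_div, eq_div_iff ha]
  linarith [h a b]

theorem sub_mul_sub_eq_of_top2 {m : ℕ} (hm : 4 ≤ m) {α α' : ℝ} (hα : 0 < α ∧ α < 1)
    (hα' : 0 < α' ∧ α' < 1) {x y x' y' : Fin m → ℝ}
    (hx : IsPLParam x) (hy : IsPLParam y) (hx' : IsPLParam x') (hy' : IsPLParam y')
    (htop : ∀ i j, i ≠ j →
      mixMean α x y (PLtop · ![i, j]) = mixMean α' x' y' (PLtop · ![i, j]))
    (a b : Fin m) : (x - y) a * (x' - y') b = (x - y) b * (x' - y') a := by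
  have hmean := congrFun (smul_add_smul_eq_of_top2 (by omega) hx hy hx' hy' htop)
  simp only [Pi.add_apply, Pi.smul_apply, smul_eq_mul] at hmean
  have hodds : ∀ {z w : ℝ}, z < 1 → w < 1 → z / (1 - z) = w / (1 - w) → z = w := by
    intro z w hz hw h
    rw [div_eq_div_iff (by linarith) (by linarith)] at h
    linarith
  refine mul_eq_mul_of_orthogonal_off_diag (by simpa using hm)
    (s := fun j => α * x j + (1 - α) * y j)
    (E := fun i => mixMean α x y (fun z => z i / (1 - z i))
      - mixMean α' x' y' (fun z => z i / (1 - z i)))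
    (F := fun i => α * (1 - α) * (x i / (1 - x i) - y i / (1 - y i)))
    (G := fun i => -(α' * (1 - α') * (x' i / (1 - x' i) - y' i / (1 - y' i))))
    (fun j => (?_ : (0 : ℝ) < _).ne') ?_ ?_ ?_ (fun i j hij => ?_) (fun i hF => ?_)
    (fun i hG => ?_) a b
  · nlinarith [hx.1 j, hy.1 j]
  · simp only [sum_add_distrib, ← mul_sum, hx.2, hy.2]
    norm_num
  · simp only [Pi.sub_apply, sum_sub_distrib, hx.2, hy.2, sub_self]
  · simp only [Pi.sub_apply, sum_sub_distrib, hx'.2, hy'.2, sub_self]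
  · have h := htop i j hij
    simp only [PLtop_pair, mixMean_mul] at h
    simp only [mixMean, Pi.sub_apply] at h ⊢
    linear_combination h - (α' * (x' i / (1 - x' i)) + (1 - α') * (y' i / (1 - y' i))) * hmean j
  · have h0 := (mul_eq_zero.mp hF).resolve_left (by nlinarith)
    exact sub_eq_zero.mpr (hodds (hx.lt_one_s3 (by omega) i) (hy.lt_one_s3 (by omega) i)
      (sub_eq_zero.mp h0))
  · have h0 := (mul_eq_zero.mp (neg_eq_zero.mp hG)).resolve_left (by nlinarith)
    exact sub_eq_zero.mpr (hodds (hx'.lt_one_s3 (by omega) i) (hy'.lt_one_s3 (by omega) i)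
      (sub_eq_zero.mp h0))

theorem mul_sum_div_eq_zero_of_sum_top2 {S : Finset ℝ} {w : ℝ → ℝ} {a b c d : ℝ}
    (h0 : ∑ t ∈ S, w t = 0) (h1 : ∑ t ∈ S, w t * t = 0) (hℓ : ∀ t ∈ S, 1 - a - t * b ≠ 0)
    (htop : ∑ t ∈ S, w t * ((a + t * b) / (1 - (a + t * b)) * (c + t * d)) = 0) :
    (b * c + d * (1 - a)) * ∑ t ∈ S, w t / (1 - a - t * b) = 0 := by
  -- `b` times the top-2 probability is `(b c + d (1 - a)) / (1 - a - t b)` plus an affine function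
  have key : ∀ t ∈ S, (b * c + d * (1 - a)) * (w t / (1 - a - t * b))
      = b * (w t * ((a + t * b) / (1 - (a + t * b)) * (c + t * d)))
        + (b * c + d * (1 - a) + d * a) * w t + b * d * (w t * t) := by
    intro t ht
    simp only [div_eq_mul_inv]
    linear_combination (w t * (b * c + d + b * d * t)) * inv_mul_cancel₀ (hℓ t ht)
  rw [mul_sum, sum_congr rfl key, sum_add_distrib, sum_add_distrib, ← mul_sum, ← mul_sum,
    ← mul_sum, htop, h0, h1]
  ring

theorem exists_pos_and_neg_of_sum_eq_zero {ι : Type*} [Fintype ι] {q : ι → ℝ}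
    (hq : ∑ i, q i = 0) (hq0 : q ≠ 0) : ∃ i j, 0 < q i ∧ q j < 0 := by
  have hex : ∃ i ∈ univ, q i ≠ 0 := by
    by_contra! h
    exact hq0 (funext fun i => h i (mem_univ i))
  obtain ⟨i, -, hi⟩ := exists_pos_of_sum_zero_of_exists_nonzero q hq hex
  obtain ⟨j, -, hj⟩ := exists_pos_of_sum_zero_of_exists_nonzero (s := univ) (-q)
    (by simp [hq]) (by obtain ⟨i, hi, h⟩ := hex; exact ⟨i, hi, neg_ne_zero.mpr h⟩)
  exact ⟨i, j, hi, neg_pos.mp hj⟩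

theorem exists_ne_zero_forall_ne_eq_mul {ι : Type*} [Fintype ι] [DecidableEq ι] {s q : ι → ℝ}
    (hq : ∑ i, q i = 0) (hq0 : q ≠ 0) {i₀ : ι} (hs : s i₀ ≠ 1)
    (hpiv : ∀ j, j ≠ i₀ → q i₀ * s j + q j * (1 - s i₀) = 0) :
    ∃ c ≠ 0, ∀ j, j ≠ i₀ → q j = c * s j := by
  have hs' : 1 - s i₀ ≠ 0 := sub_ne_zero.mpr hs.symm
  have hqc : ∀ j, j ≠ i₀ → q j = -q i₀ / (1 - s i₀) * s j := fun j hj => by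
    rw [div_mul_eq_mul_div, eq_div_iff hs']
    linear_combination hpiv j hj
  refine ⟨_, fun hc => hq0 (funext fun i => ?_), hqc⟩
  have hoff : ∀ j, j ≠ i₀ → q j = 0 := fun j hj => by rw [hqc j hj, hc, zero_mul]
  rcases eq_or_ne i i₀ with rfl | hi
  · rwa [← add_sum_erase univ q (mem_univ i), sum_eq_zero fun j hj => hoff j (ne_of_mem_erase hj),
      add_zero] at hq
  · exact hoff i hi

theorem eq_zero_of_line_of_forall_ne {m : ℕ} (hm : 4 ≤ m) {s q : Fin m → ℝ} {ν : ℝ →₀ ℝ}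
    (hcard : #ν.support ≤ 4) (hsupp : ∀ t ∈ ν.support, IsPLParam (s + t • q))
    (h0 : ∑ t ∈ ν.support, ν t = 0) (h1 : ∑ t ∈ ν.support, ν t * t = 0) {i₀ j : Fin m}
    (hq : q j ≠ 0) (hrigid : ∀ t : ℝ, ∀ l, l ≠ i₀ → (s + t • q) l = (s + t • q) j)
    (htop : ∑ t ∈ ν.support, ν t / (1 - s j - t * q j) = 0)
    (hway : ∑ t ∈ ν.support, ν t * ((s + t • q) j / ((s + t • q) j + (s + t • q) i₀)) = 0) :
    ν = 0 := by
  set M : ℝ := (m : ℝ) - 2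
  have hM : 2 ≤ M := by
    have : (4 : ℝ) ≤ m := by exact_mod_cast hm
    linarith
  have hpos : ∀ t ∈ ν.support, 0 < 1 - M * s j - t * (M * q j) := fun t ht => by
    have hsum := (hsupp t ht).add_eq_of_forall_ne (hrigid t)
    have hpos := add_pos ((hsupp t ht).1 j) ((hsupp t ht).1 i₀)
    simp only [Pi.add_apply, Pi.smul_apply, smul_eq_mul] at hsum hpos
    linarith
  -- the pairwise probability of `j` over `i₀` is `z / (1 - M z)` with `z = s j + t * q j`
  have hway' : ∑ t ∈ ν.support, ν t / (1 - M * s j - t * (M * q j)) = 0 := by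
    have key : ∀ t ∈ ν.support, ν t / (1 - M * s j - t * (M * q j))
        = ν t + M * (ν t * ((s + t • q) j / ((s + t • q) j + (s + t • q) i₀))) := by
      intro t ht
      rw [(hsupp t ht).add_eq_of_forall_ne (hrigid t)]
      simp only [Pi.add_apply, Pi.smul_apply, smul_eq_mul, div_eq_mul_inv]
      linear_combination ν t * inv_mul_cancel₀ (hpos t ht).ne'
    rw [sum_congr rfl key, sum_add_distrib, ← mul_sum, h0, hway]
    ring
  refine Finsupp.eq_zero_of_sum_div_sub_mul_eq_zero hcard hq (mul_ne_zero (by linarith) hq)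
    (fun h => ?_) (fun t ht => ?_) (fun t ht => (hpos t ht).ne') h0 h1 htop hway'
  · have : q j * (M - 1) = 0 := by linear_combination h
    exact mul_ne_zero hq (by linarith) this
  · have := (hsupp t ht).lt_one_s3 (by omega) j
    simp only [Pi.add_apply, Pi.smul_apply, smul_eq_mul] at this
    exact (show 0 < 1 - s j - t * q j by linarith).ne'

theorem eq_zero_of_line {m : ℕ} (hm : 4 ≤ m) {s q : Fin m → ℝ} (hs : IsPLParam s)
    (hq : ∑ i, q i = 0) (hq0 : q ≠ 0) {ν : ℝ →₀ ℝ} (hcard : #ν.support ≤ 4)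
    (hsupp : ∀ t ∈ ν.support, IsPLParam (s + t • q))
    (h0 : ∑ t ∈ ν.support, ν t = 0) (h1 : ∑ t ∈ ν.support, ν t * t = 0)
    (htop : ∀ i j, i ≠ j → ∑ t ∈ ν.support, ν t * PLtop (s + t • q) ![i, j] = 0)
    (hway : ∀ i j, i ≠ j →
      ∑ t ∈ ν.support, ν t * ((s + t • q) i / ((s + t • q) i + (s + t • q) j)) = 0) :
    ν = 0 := by
  have hz : ∀ t ∈ ν.support, ∀ i, 1 - s i - t * q i ≠ 0 := fun t ht i => by
    have := (hsupp t ht).lt_one_s3 (by omega) i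
    simp only [Pi.add_apply, Pi.smul_apply, smul_eq_mul] at this
    exact (show 0 < 1 - s i - t * q i by linarith).ne'
  set A : Fin m → ℝ := fun i => ∑ t ∈ ν.support, ν t / (1 - s i - t * q i)
  have hA : ∀ i j, i ≠ j → (q i * s j + q j * (1 - s i)) * A i = 0 := fun i j hij =>
    mul_sum_div_eq_zero_of_sum_top2 h0 h1 (fun t ht => hz t ht i)
      (by simpa only [PLtop_pair, Pi.add_apply, Pi.smul_apply, smul_eq_mul] using htop i j hij)
  have hs1 : ∀ i, 0 < 1 - s i := fun i => sub_pos.mpr (hs.lt_one_s3 (by omega) i)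
  by_cases hgen : ∀ i, A i = 0
  · -- the poles at indices with `q i > 0` and `q j < 0` have opposite signs
    obtain ⟨i, j, hi, hj⟩ := exists_pos_and_neg_of_sum_eq_zero hq hq0
    refine Finsupp.eq_zero_of_sum_div_sub_mul_eq_zero hcard hi.ne' hj.ne (fun h => ?_)
      (fun t ht => hz t ht i) (fun t ht => hz t ht j) h0 h1 (hgen i) (hgen j)
    nlinarith [hs1 i, hs1 j]
  push Not at hgen
  obtain ⟨i₀, hi₀⟩ := hgen
  -- `A i₀ ≠ 0` makes `i₀` a pivot: off `i₀`, `q` is proportional to `s`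
  obtain ⟨c, hc, hqc⟩ := exists_ne_zero_forall_ne_eq_mul hq hq0 (sub_pos.mp (hs1 i₀)).ne
    fun j hj => (mul_eq_zero.mp (hA i₀ j hj.symm)).resolve_right hi₀
  have hA₀ : ∀ j, j ≠ i₀ → A j = 0 := fun j hj => by
    obtain ⟨l, hl, hlj, -⟩ := Fintype.exists_ne_of_four_le_card (by simpa using hm) i₀ j j
    refine (mul_eq_zero.mp (hA j l hlj.symm)).resolve_left ?_
    rw [hqc j hj, hqc l hl]
    ring_nf
    exact mul_ne_zero hc (hs.1 l).ne'
  have hqs : ∀ j, j ≠ i₀ → q j ≠ 0 := fun j hj => by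
    rw [hqc j hj]
    exact mul_ne_zero hc (hs.1 j).ne'
  have : Nontrivial (Fin m) := Fin.nontrivial_iff_two_le.mpr (by omega)
  obtain ⟨j₁, hj₁⟩ := exists_ne i₀
  by_cases hconst : ∀ l, l ≠ i₀ → s l = s j₁
  · refine eq_zero_of_line_of_forall_ne hm hcard hsupp h0 h1 (hqs j₁ hj₁) (fun t l hl => ?_)
      (hA₀ j₁ hj₁) (hway j₁ i₀ hj₁)
    simp only [Pi.add_apply, Pi.smul_apply, smul_eq_mul, hconst l hl, hqc l hl, hqc j₁ hj₁]
  push Not at hconst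
  obtain ⟨j, hj, hsj⟩ := hconst
  refine Finsupp.eq_zero_of_sum_div_sub_mul_eq_zero hcard (hqs j hj) (hqs j₁ hj₁) (fun h => ?_)
    (fun t ht => hz t ht j) (fun t ht => hz t ht j₁) h0 h1 (hA₀ j hj) (hA₀ j₁ hj₁)
  rw [hqc j hj, hqc j₁ hj₁] at h
  have : c * (s j - s j₁) = 0 := by linear_combination -h
  exact hsj (sub_eq_zero.mp ((mul_eq_zero.mp this).resolve_left hc))

theorem mix_eq_of_line {m : ℕ} (hm : 4 ≤ m) {s q : Fin m → ℝ} (hs : IsPLParam s)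
    (hq : ∑ i, q i = 0) {α α' t₁ t₂ t₁' t₂' : ℝ}
    (hpts : ∀ t ∈ ({t₁, t₂, t₁', t₂'} : Finset ℝ), IsPLParam (s + t • q))
    (hmean : α * t₁ + (1 - α) * t₂ = α' * t₁' + (1 - α') * t₂')
    (htop : ∀ i j, i ≠ j → mixMean α (s + t₁ • q) (s + t₂ • q) (PLtop · ![i, j])
      = mixMean α' (s + t₁' • q) (s + t₂' • q) (PLtop · ![i, j]))
    (hway : ∀ i j, i ≠ j → mixMean α (s + t₁ • q) (s + t₂ • q) (fun θ => θ i / (θ i + θ j))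
      = mixMean α' (s + t₁' • q) (s + t₂' • q) (fun θ => θ i / (θ i + θ j))) :
    mix α (s + t₁ • q) (s + t₂ • q) = mix α' (s + t₁' • q) (s + t₂' • q) := by
  rcases eq_or_ne q 0 with rfl | hq0
  · simp only [smul_zero, add_zero, mix_self]
  set ν := mix α t₁ t₂ - mix α' t₁' t₂'
  have hsum : ∀ f : ℝ → ℝ, ∑ t ∈ ν.support, ν t * f t
      = mixMean α t₁ t₂ f - mixMean α' t₁' t₂' f :=
    sum_support_mix_sub_mix α α' t₁ t₂ t₁' t₂'
  have hν : ν = 0 := by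
    refine eq_zero_of_line hm hs hq hq0
      ((card_le_card (support_mix_sub_mix_subset _ _ _ _ _ _)).trans card_le_four)
      (fun t ht => hpts t (support_mix_sub_mix_subset _ _ _ _ _ _ ht)) ?_ ?_
      (fun i j hij => by rw [hsum]; exact sub_eq_zero.mpr (htop i j hij))
      (fun i j hij => by rw [hsum]; exact sub_eq_zero.mpr (hway i j hij))
    · have h0 := hsum fun _ => 1
      simp only [mul_one, mixMean] at h0
      rw [h0]
      ring
    · have h1 := hsum id
      simp only [id, mixMean] at h1
      rw [h1, hmean, sub_self]
  simpa only [mapDomain_mix] using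
    congrArg (Finsupp.mapDomain fun t => s + t • q) (sub_eq_zero.mp hν)

/-- **Identifiability of 2-PL from ranked top-2 plus 2-way data** (Theorem 2(b)):
over `m ≥ 4` alternatives, if two 2-PL parameters assign the same marginal
probability to every ranked top-2 order `a_i ≻ a_j ≻ others` and to every
2-way order `a_i ≻ a_j` (probability `θ_i/(θ_i+θ_j)`), then their mixing
measures coincide. -/
theorem twoPL_identifiable_top2_2way
    (m : ℕ) (hm : 4 ≤ m)
    (α α' : ℝ) (hα : 0 < α ∧ α < 1) (hα' : 0 < α' ∧ α' < 1)
    (θ1 θ2 θ1' θ2' : Fin m → ℝ)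
    (hθ1 : IsPLParam θ1) (hθ2 : IsPLParam θ2)
    (hθ1' : IsPLParam θ1') (hθ2' : IsPLParam θ2')
    (htop2 : ∀ σ : Fin 2 → Fin m, Function.Injective σ →
      α * PLtop θ1 σ + (1 - α) * PLtop θ2 σ
        = α' * PLtop θ1' σ + (1 - α') * PLtop θ2' σ)
    (hway2 : ∀ i j : Fin m, i ≠ j →
      α * (θ1 i / (θ1 i + θ1 j)) + (1 - α) * (θ2 i / (θ2 i + θ2 j))
        = α' * (θ1' i / (θ1' i + θ1' j)) + (1 - α') * (θ2' i / (θ2' i + θ2' j))) :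
    mixing2 α θ1 θ2 = mixing2 α' θ1' θ2' := by
  have htop : ∀ i j, i ≠ j →
      mixMean α θ1 θ2 (PLtop · ![i, j]) = mixMean α' θ1' θ2' (PLtop · ![i, j]) :=
    fun i j hij => htop2 ![i, j] (injective_pair_iff_ne.mpr hij)
  have hmean := smul_add_smul_eq_of_top2 (by omega) hθ1 hθ2 hθ1' hθ2' htop
  have hs : IsPLParam (α • θ1 + (1 - α) • θ2) :=
    convex_setOf_isPLParam hθ1 hθ2 hα.1.le (by linarith [hα.2]) (by ring)
  obtain ⟨q, hq, c, c', hc, hc'⟩ := exists_smul_eq_of_mul_eq_mul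
    (sub_mul_sub_eq_of_top2 hm hα hα' hθ1 hθ2 hθ1' hθ2' htop)
    (by simp [sum_sub_distrib, hθ1.2, hθ2.2]) (by simp [sum_sub_distrib, hθ1'.2, hθ2'.2])
  obtain ⟨e₁, e₂⟩ := eq_add_smul_of_sub_eq_smul α hc
  obtain ⟨e₁', e₂'⟩ := eq_add_smul_of_sub_eq_smul α' hc'
  rw [← hmean] at e₁' e₂'
  generalize α • θ1 + (1 - α) • θ2 = s at hs e₁ e₂ e₁' e₂'
  subst e₁ e₂ e₁' e₂'
  rw [← coe_mix, ← coe_mix]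
  refine congrArg _ (mix_eq_of_line hm hs hq ?_ (by ring) htop hway2)
  simp only [mem_insert, mem_singleton]
  rintro t (rfl | rfl | rfl | rfl) <;> assumption
end

section
/- Let p ∈ (−1, 0) with p ≠ −1/2, and let e_1, e_2, e_3, e_4 ∈ (0,1) be pairwise distinct. Then the 4×4 real matrix whose r-th column is (1, e_r, 1/(1 + p − p·e_r), 1/((p+1)·e_r − p))ᵀ is invertible. (Under the hypotheses both denominators 1 + p − p·e_r and (p+1)·e_r − p are strictly positive.) -/
/-!
A vanishing linear combination `c` of the rows, multiplied by both denominators, becomes a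
polynomial of degree at most three with four distinct roots `e r`, hence the zero polynomial.
Evaluating it at the root of `1 + p - p x` (resp. of `(p + 1) x - p`) leaves only `c 2` (resp.
`c 3`) times the other denominator, which is `(2p + 1) / p` (resp. `(2p + 1) / (p + 1)`) there;
so `c 2 = c 3 = 0`, and then `c 0 + c 1 X = 0`.
-/

open Polynomial

namespace Fstar

variable {K : Type*} [Field K] (p : K)

noncomputable def den3 : K[X] := C (1 + p) - C p * X

noncomputable def den4 : K[X] := C (p + 1) * X - C p

noncomputable def clearedPoly (c : Fin 4 → K) : K[X] :=
  (C (c 0) + C (c 1) * X) * den3 p * den4 p + C (c 2) * den4 p + C (c 3) * den3 p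

@[simp] lemma eval_den3 (x : K) : (den3 p).eval x = 1 + p - p * x := by simp [den3]

@[simp] lemma eval_den4 (x : K) : (den4 p).eval x = (p + 1) * x - p := by simp [den4]

lemma eval_clearedPoly (c : Fin 4 → K) {x : K} (h3 : 1 + p - p * x ≠ 0)
    (h4 : (p + 1) * x - p ≠ 0) :
    (clearedPoly p c).eval x = (1 + p - p * x) * ((p + 1) * x - p) *
      (c 0 * 1 + c 1 * x + c 2 * (1 / (1 + p - p * x)) + c 3 * (1 / ((p + 1) * x - p))) := by
  simp only [clearedPoly, eval_add, eval_mul, eval_C, eval_X, eval_den3, eval_den4]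
  linear_combination (-c 2 * ((p + 1) * x - p)) * mul_one_div_cancel h3
    - c 3 * (1 + p - p * x) * mul_one_div_cancel h4

lemma natDegree_clearedPoly_le (c : Fin 4 → K) : (clearedPoly p c).natDegree ≤ 3 := by
  unfold clearedPoly den3 den4
  compute_degree

variable {p}

lemma eq_zero_of_clearedPoly_eq_zero (hp : p ≠ 0) (hp1 : p + 1 ≠ 0) (h2p : 2 * p + 1 ≠ 0)
    {c : Fin 4 → K} (h : clearedPoly p c = 0) : c = 0 := by
  have hc2 : c 2 = 0 := by
    have hroot : (den3 p).eval ((1 + p) / p) = 0 := by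
      rw [eval_den3]; field_simp; ring
    have hval : (den4 p).eval ((1 + p) / p) = (2 * p + 1) / p := by
      rw [eval_den4]; field_simp; ring
    have := congrArg (eval ((1 + p) / p)) h
    simp only [clearedPoly, eval_add, eval_mul, eval_C, hroot, hval, eval_zero] at this
    simpa [hp, h2p] using this
  have hc3 : c 3 = 0 := by
    have hroot : (den4 p).eval (p / (p + 1)) = 0 := by
      rw [eval_den4]; field_simp; ring
    have hval : (den3 p).eval (p / (p + 1)) = (2 * p + 1) / (p + 1) := by
      rw [eval_den3]; field_simp; ring
    have := congrArg (eval (p / (p + 1))) h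
    simp only [clearedPoly, eval_add, eval_mul, eval_C, hroot, hval, eval_zero] at this
    simpa [hp1, h2p] using this
  have h3 : den3 p ≠ 0 := fun h3 => hp1 (by simpa [add_comm] using congrArg (eval 0) h3)
  have h4 : den4 p ≠ 0 := fun h4 => hp (by simpa using congrArg (eval 0) h4)
  have hlin : C (c 0) + C (c 1) * X = 0 := by
    simpa [clearedPoly, hc2, hc3, h3, h4] using h
  have hc0 : c 0 = 0 := by simpa using congrArg (coeff · 0) hlin
  have hc1 : c 1 = 0 := by simpa using congrArg (coeff · 1) hlin
  ext i
  fin_cases i <;> assumption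

lemma eq_zero_of_forall_combination_eq_zero (hp : p ≠ 0) (hp1 : p + 1 ≠ 0)
    (h2p : 2 * p + 1 ≠ 0) {e : Fin 4 → K} (he : Function.Injective e)
    (h3 : ∀ r, 1 + p - p * e r ≠ 0) (h4 : ∀ r, (p + 1) * e r - p ≠ 0) {c : Fin 4 → K}
    (hrel : ∀ r, c 0 * 1 + c 1 * e r + c 2 * (1 / (1 + p - p * e r))
      + c 3 * (1 / ((p + 1) * e r - p)) = 0) : c = 0 := by
  refine eq_zero_of_clearedPoly_eq_zero hp hp1 h2p ?_
  refine eq_zero_of_natDegree_lt_card_of_eval_eq_zero _ he (fun r => ?_) ?_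
  · rw [eval_clearedPoly p c (h3 r) (h4 r), hrel r, mul_zero]
  · simpa using (natDegree_clearedPoly_le p c).trans_lt (by norm_num : 3 < 4)

end Fstar

/-- The matrix `F*` arising in Case 1 of the proof that 2-PL is identifiable
from ranked top-2 plus 2-way data: for `p ∈ (-1,0)` with `p ≠ -1/2` and
pairwise distinct `e_1, …, e_4 ∈ (0,1)`, the 4×4 matrix whose `r`-th column is
`(1, e_r, 1/(1 + p - p e_r), 1/((p+1) e_r - p))ᵀ` is invertible. -/
theorem Fstar_invertible
    (p : ℝ) (hp1 : -1 < p) (hp0 : p < 0) (hph : p ≠ -(1/2))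
    (e : Fin 4 → ℝ) (he : ∀ r, 0 < e r ∧ e r < 1)
    (hdist : Function.Injective e) :
    IsUnit (Matrix.of fun (i r : Fin 4) =>
      ![(1 : ℝ), e r, 1 / (1 + p - p * e r), 1 / ((p + 1) * e r - p)] i) := by
  rw [Matrix.isUnit_iff_isUnit_det, isUnit_iff_ne_zero]
  intro hdet
  obtain ⟨c, hc, hker⟩ := Matrix.exists_vecMul_eq_zero_iff.mpr hdet
  refine hc (Fstar.eq_zero_of_forall_combination_eq_zero hp0.ne (by linarith)
    (by contrapose! hph; linarith) hdist (fun r => ?_) (fun r => ?_) (fun r => ?_))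
  · nlinarith [he r]
  · nlinarith [he r]
  · simpa [Matrix.vecMul, dotProduct, Fin.sum_univ_four] using congrFun hker r
end

section
/- Let p ∈ (−1, 0) with p ≠ −1/2, let e_1, e_2, e_3, e_4 ∈ (0,1) be pairwise distinct, and set b_r = p·(e_r − 1) for r = 1,...,4 (so each b_r ∈ (0,1), 1 − b_r > 0, and e_r + b_r > 0). Then the 4×4 real matrix whose r-th column is (1, e_r, e_r·b_r/(1 − b_r), e_r/(e_r + b_r))ᵀ is invertible. -/
set_option maxHeartbeats 1000000 in
theorem my_det_fin_four {R : Type*} [CommRing R] (A : Matrix (Fin 4) (Fin 4) R) :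
    A.det =
      A 0 0 * A 1 1 * A 2 2 * A 3 3 - A 0 0 * A 1 1 * A 2 3 * A 3 2 -
        A 0 0 * A 1 2 * A 2 1 * A 3 3 + A 0 0 * A 1 2 * A 2 3 * A 3 1 +
        A 0 0 * A 1 3 * A 2 1 * A 3 2 - A 0 0 * A 1 3 * A 2 2 * A 3 1 -
        A 0 1 * A 1 0 * A 2 2 * A 3 3 + A 0 1 * A 1 0 * A 2 3 * A 3 2 +
        A 0 1 * A 1 2 * A 2 0 * A 3 3 - A 0 1 * A 1 2 * A 2 3 * A 3 0 -
        A 0 1 * A 1 3 * A 2 0 * A 3 2 + A 0 1 * A 1 3 * A 2 2 * A 3 0 +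
        A 0 2 * A 1 0 * A 2 1 * A 3 3 - A 0 2 * A 1 0 * A 2 3 * A 3 1 -
        A 0 2 * A 1 1 * A 2 0 * A 3 3 + A 0 2 * A 1 1 * A 2 3 * A 3 0 +
        A 0 2 * A 1 3 * A 2 0 * A 3 1 - A 0 2 * A 1 3 * A 2 1 * A 3 0 -
        A 0 3 * A 1 0 * A 2 1 * A 3 2 + A 0 3 * A 1 0 * A 2 2 * A 3 1 +
        A 0 3 * A 1 1 * A 2 0 * A 3 2 - A 0 3 * A 1 1 * A 2 2 * A 3 0 -
        A 0 3 * A 1 2 * A 2 0 * A 3 1 + A 0 3 * A 1 2 * A 2 1 * A 3 0 := by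
  rw [Matrix.det_succ_row_zero, Fin.sum_univ_four]
  simp (config := { decide := true }) only [Matrix.det_fin_three, Matrix.submatrix_apply,
    Fin.succAbove, Fin.lt_def, Fin.castSucc, Fin.succ, Fin.castAdd, Fin.castLE, Fin.val_zero,
    Fin.val_one, if_true, if_false]
  norm_num [show ((3:Fin 4):ℕ) = 3 from rfl, show ((2:Fin 4):ℕ) = 2 from rfl,
    show (⟨2, by omega⟩ : Fin 4) = 2 from rfl, show (⟨3, by omega⟩ : Fin 4) = 3 from rfl]
  ring

set_option maxHeartbeats 4000000 in
/-- The moment matrix `F̂` arising in Case 1 of the proof that 2-PL is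
identifiable from ranked top-2 plus 2-way data: for `p ∈ (-1,0)` with
`p ≠ -1/2`, pairwise distinct `e_1, …, e_4 ∈ (0,1)` and `b_r = p (e_r - 1)`,
the 4×4 matrix whose `r`-th column is
`(1, e_r, e_r b_r/(1 - b_r), e_r/(e_r + b_r))ᵀ` is invertible. -/
theorem Fhat_invertible
    (p : ℝ) (hp1 : -1 < p) (hp0 : p < 0) (hph : p ≠ -(1/2))
    (e : Fin 4 → ℝ) (he : ∀ r, 0 < e r ∧ e r < 1)
    (hdist : Function.Injective e)
    (b : Fin 4 → ℝ) (hb : ∀ r, b r = p * (e r - 1)) :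
    IsUnit (Matrix.of fun (i r : Fin 4) =>
      ![(1 : ℝ), e r, e r * b r / (1 - b r), e r / (e r + b r)] i) := by
  have hbpos : ∀ r, 0 < b r := by
    intro r
    rw [hb r]
    have := (he r).2
    nlinarith
  have hblt : ∀ r, b r < 1 := by
    intro r
    rw [hb r]
    have h1 := (he r).1
    have h2 := (he r).2
    nlinarith
  have h1b : ∀ r, (1 : ℝ) - b r ≠ 0 := fun r => by have := hblt r; linarith
  have heb : ∀ r, e r + b r ≠ 0 := fun r => by
    have := (he r).1; have := hbpos r; positivity
  have hsub : ∀ r s : Fin 4, r ≠ s → e r - e s ≠ 0 := by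
    intro r s hrs
    exact sub_ne_zero.mpr (fun h => hrs (hdist h))
  have hp : p ≠ 0 := ne_of_lt hp0
  have hp1' : (1 : ℝ) + p ≠ 0 := by intro h; nlinarith
  have hp2 : (1 : ℝ) + 2 * p ≠ 0 := by intro h; apply hph; linarith
  -- the constant coefficient matrix
  set Cm : Matrix (Fin 4) (Fin 4) ℝ :=
    !![-(p*(1+p)), (1+p)^2+p^2, -(p*(1+p)), 0;
       0, -(p*(1+p)), (1+p)^2+p^2, -(p*(1+p));
       0, p^2, -(p*(1+2*p)), p*(1+p);
       0, 1+p, -p, 0] with hCm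
  -- the factorization
  have hM : (Matrix.of fun (i r : Fin 4) =>
        ![(1 : ℝ), e r, e r * b r / (1 - b r), e r / (e r + b r)] i)
      = Cm * (Matrix.transpose (Matrix.vandermonde e)) *
        Matrix.diagonal (fun r => ((1 - b r) * (e r + b r))⁻¹) := by
    ext i r
    rw [Matrix.mul_diagonal]
    have hr1 := h1b r
    have hr2 := heb r
    rw [hb r] at hr1 hr2
    fin_cases i <;>
      · simp [hCm, Matrix.mul_apply, Fin.sum_univ_four, Matrix.vandermonde, hb r,
          show ((3:Fin 4):ℕ) = 3 from rfl, show ((2:Fin 4):ℕ) = 2 from rfl,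
          show ((1:Fin 4):ℕ) = 1 from rfl, show ((0:Fin 4):ℕ) = 0 from rfl]
        field_simp
        ring
  rw [hM]
  have hC : IsUnit Cm := by
    rw [Matrix.isUnit_iff_isUnit_det, isUnit_iff_ne_zero]
    have hd : Cm.det = -(p^2*(1+2*p)*(1+p)^2) := by
      rw [my_det_fin_four]
      simp [hCm, Matrix.vecHead, Matrix.vecTail]
      ring
    rw [hd]
    intro h
    have : p^2*(1+2*p)*(1+p)^2 = 0 := by linarith
    rcases mul_eq_zero.mp this with h' | h'
    · rcases mul_eq_zero.mp h' with h'' | h''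
      · exact hp (pow_eq_zero_iff (by norm_num) |>.mp h'')
      · exact hp2 h''
    · exact hp1' (pow_eq_zero_iff (by norm_num) |>.mp h')
  have hV : IsUnit (Matrix.transpose (Matrix.vandermonde e)) := by
    rw [Matrix.isUnit_iff_isUnit_det, Matrix.det_transpose, Matrix.det_vandermonde,
      isUnit_iff_ne_zero]
    apply Finset.prod_ne_zero_iff.mpr
    intro i _
    apply Finset.prod_ne_zero_iff.mpr
    intro j hj
    exact hsub j i (Finset.mem_Ioi.mp hj).ne'
  have hD : IsUnit (Matrix.diagonal (fun r => ((1 - b r) * (e r + b r))⁻¹)) := by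
    rw [Matrix.isUnit_iff_isUnit_det, Matrix.det_diagonal, isUnit_iff_ne_zero]
    apply Finset.prod_ne_zero_iff.mpr
    intro r _
    exact inv_ne_zero (mul_ne_zero (h1b r) (heb r))
  exact (hC.mul hV).mul hD
end
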